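/- arXiv:2212.14831 — 6 statements merged into one kernel-verified Lean document; each statement's English description precedes it below -/
import Mathlib

section
/- A permutation w of {1,...,n} is a standard Coxeter element of the symmetric group S_n (i.e., a product of the adjacent transpositions s_1,...,s_{n-1} each used exactly once, in some order) if and only if w consists of a single n-cycle whose cycle notation (a_1, a_2, ..., a_n) starting at a_1 = 1 has an initial strictly increasing subsequence 1 = a_1 < a_2 < ... < a_m = n followed by a strictly decreasing sequence n = a_m > a_{m+1} > ... > a_n > 1. -/
/-- The adjacent transposition `sᵢ = (i, i+1)` in the symmetric group on `Fin (n+1)`. -/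
def adjSwap (n : ℕ) (i : Fin n) : Equiv.Perm (Fin (n+1)) :=
  Equiv.swap i.castSucc i.succ

/-- `c` is a standard Coxeter element of `S_{n+1}`: a product of the adjacent
transpositions `s₁, …, sₙ`, each used exactly once, in some order. -/
def IsStdCoxeter (n : ℕ) (c : Equiv.Perm (Fin (n+1))) : Prop :=
  ∃ l : List (Fin n), l.Nodup ∧ (∀ i, i ∈ l) ∧ c = (l.map (adjSwap n)).prod

/-!
Induct on the largest point `t` moved. A standard Coxeter element of the symmetric group on
`{0, …, t+1}` is `sₜ c` or `c sₜ` with `c` a standard Coxeter element on `{0, …, t}`: `sₜ`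
commutes with every `sⱼ` except `sₜ₋₁`, so it can be moved to the end of the word if `sₜ₋₁`
comes before it, and to the front otherwise. In cycle notation, `sₜ c` inserts `t+1` just
before `t` and `c sₜ` just after it, and both keep the cycle unimodal. Conversely, in a unimodal
cycle the maximum `t+1` sits next to the second largest element `t`, so deleting it undoes one
of the two insertions.
-/

open Equiv

namespace List

variable {α : Type*}

theorem Nodup.mem_append_iff_mem_append_cons {A B : List α} {s x : α}
    (h : (A ++ s :: B).Nodup) : x ∈ A ++ B ↔ x ∈ A ++ s :: B ∧ x ≠ s := by
  have hs : s ∉ A ++ B := (nodup_cons.1 (nodup_middle.1 h)).1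
  simp only [mem_append, mem_cons]
  constructor
  · rintro hx
    exact ⟨by tauto, by rintro rfl; exact hs (mem_append.2 hx)⟩
  · tauto

theorem prod_append_cons_eq_mul_prod {M : Type*} [Monoid M] {l₁ l₂ : List M} {x : M}
    (h : ∀ y ∈ l₁, Commute x y) : (l₁ ++ x :: l₂).prod = x * (l₁ ++ l₂).prod := by
  rw [prod_append, prod_cons, ← mul_assoc, ← (Commute.list_prod_right l₁ x h).eq, mul_assoc,
    prod_append]

theorem prod_append_cons_eq_prod_mul {M : Type*} [Monoid M] {l₁ l₂ : List M} {x : M}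
    (h : ∀ y ∈ l₂, Commute x y) : (l₁ ++ x :: l₂).prod = (l₁ ++ l₂).prod * x := by
  rw [prod_append, prod_cons, (Commute.list_prod_right l₂ x h).eq, prod_append, mul_assoc]

section FormPerm

variable [DecidableEq α]

theorem formPerm_append_comm {l₁ l₂ : List α} (h : (l₁ ++ l₂).Nodup) :
    formPerm (l₁ ++ l₂) = formPerm (l₂ ++ l₁) :=
  formPerm_eq_of_isRotated h isRotated_append

theorem formPerm_append_cons_cons_eq_swap_mul {l₁ l₂ : List α} {x y : α}
    (h : (l₁ ++ y :: x :: l₂).Nodup) :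
    formPerm (l₁ ++ y :: x :: l₂) = Equiv.swap x y * formPerm (l₁ ++ x :: l₂) := by
  have h' : (l₁ ++ x :: l₂).Nodup := h.sublist (by simp)
  rw [formPerm_append_comm h, formPerm_append_comm h', cons_append, cons_append,
    formPerm_cons_cons, Equiv.swap_comm]

theorem formPerm_append_cons_cons_eq_mul_swap {l₁ l₂ : List α} {x y : α}
    (h : (l₁ ++ x :: y :: l₂).Nodup) :
    formPerm (l₁ ++ x :: y :: l₂) = formPerm (l₁ ++ x :: l₂) * Equiv.swap x y := by
  have h' : (l₁ ++ x :: l₂).Nodup := h.sublist (by simp)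
  rw [show l₁ ++ x :: y :: l₂ = (l₁ ++ [x, y]) ++ l₂ by simp] at h ⊢
  rw [show l₁ ++ x :: l₂ = (l₁ ++ [x]) ++ l₂ by simp] at h' ⊢
  rw [formPerm_append_comm h, formPerm_append_comm h', ← append_assoc, formPerm_append_pair,
    append_assoc]

theorem formPerm_ofFn_apply {k : ℕ} {a : Fin (k+1) → α} (ha : Function.Injective a)
    (i : Fin (k+1)) : (ofFn a).formPerm (a i) = a (i + 1) := by
  have h := formPerm_apply_getElem (ofFn a) (nodup_ofFn.2 ha) i (by simp [i.is_lt])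
  simp only [List.getElem_ofFn, length_ofFn] at h
  rw [h]
  congr 1
  ext
  simp [Fin.val_add]

end FormPerm

theorem Nodup.exists_equiv_ofFn_eq {k : ℕ} {L : List (Fin k)} (hnd : L.Nodup)
    (hL : ∀ x, x ∈ L) : ∃ a : Fin k ≃ Fin k, ofFn a = L := by
  let e := hnd.getEquivOfForallMemList L hL
  have hlen : L.length = k := by simpa using Fintype.card_congr e
  refine ⟨(finCongr hlen.symm).trans e, ext_getElem (by simp [hlen]) fun i h₁ h₂ => ?_⟩
  simp [e]

theorem exists_split_ofFn_iff {R S : α → α → Prop} {k : ℕ} {a : Fin k → α} {t : α} :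
    (∃ U D, ofFn a = U ++ t :: D ∧ (U ++ [t]).Pairwise R ∧ (t :: D).Pairwise S) ↔
      ∃ m, a m = t ∧ (∀ i j, i < j → j ≤ m → R (a i) (a j)) ∧
        (∀ i j, m ≤ i → i < j → S (a i) (a j)) := by
  constructor
  · rintro ⟨U, D, hL, hU, hD⟩
    have hlen : U.length + (D.length + 1) = k := by simpa using (congrArg length hL).symm
    have ha : ∀ i : Fin k, a i = (U ++ t :: D)[i.val]'(by simp; omega) := fun i => by
      simp only [← hL, List.getElem_ofFn]
    refine ⟨⟨U.length, by omega⟩, by simp [ha], fun i j hij hjm => ?_, fun i j hmi hij => ?_⟩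
    · have hij : (i : ℕ) < j := hij
      have hjm : (j : ℕ) ≤ U.length := hjm
      have := pairwise_iff_getElem.1 hU i j (by simp; omega) (by simp; omega) hij
      rw [ha, ha]
      grind
    · have hij : (i : ℕ) < j := hij
      have hmi : U.length ≤ (i : ℕ) := hmi
      have := pairwise_iff_getElem.1 hD (i - U.length) (j - U.length) (by simp; omega)
        (by simp; omega) (by omega)
      rw [ha, ha]
      grind
  · rintro ⟨m, rfl, hinc, hdec⟩
    refine ⟨(ofFn a).take m, (ofFn a).drop (m + 1), ?_, ?_, ?_⟩
    · have h := drop_eq_getElem_cons (l := ofFn a) (i := m) (by simp)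
      rw [List.getElem_ofFn] at h
      rw [← h, take_append_drop]
    · refine pairwise_iff_getElem.2 fun i j hi hj hij => ?_
      simp only [length_append, length_take, length_ofFn, length_singleton] at hi hj
      have := hinc ⟨i, by omega⟩ ⟨j, by omega⟩ hij (Fin.mk_le_mk.2 (by omega))
      grind
    · refine pairwise_iff_getElem.2 fun i j hi hj hij => ?_
      simp only [length_cons, length_drop, length_ofFn] at hi hj
      have := hdec ⟨m + i, by omega⟩ ⟨m + j, by omega⟩ (Fin.mk_le_mk.2 (by omega))
        (Fin.mk_lt_mk.2 (by omega))
      grind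

end List

namespace CovBy

variable {α : Type*} [LinearOrder α] {t s : α} {A B : List α}

theorem mem_append_cons_iff_le (hts : t ⋖ s) (h : ∀ x, x ∈ A ++ B ↔ x ≤ t) (x : α) :
    x ∈ A ++ s :: B ↔ x ≤ s := by
  rw [le_iff_lt_or_eq, covBy_iff_lt_iff_le_left.1 hts, ← h]
  simp only [List.mem_append, List.mem_cons]
  tauto

theorem mem_append_iff_le (hts : t ⋖ s) (hnd : (A ++ s :: B).Nodup)
    (h : ∀ x, x ∈ A ++ s :: B ↔ x ≤ s) (x : α) : x ∈ A ++ B ↔ x ≤ t := by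
  rw [hnd.mem_append_iff_mem_append_cons, h, ← lt_iff_le_and_ne,
    covBy_iff_lt_iff_le_left.1 hts]

end CovBy

section Unimodal

variable {α : Type*} [LinearOrder α] [OrderBot α] {t s : α}

/-- `L` is the cycle notation, started at `⊥`, of a cycle on `{x | x ≤ t}` that increases
strictly up to `t` and then decreases strictly. -/
structure IsUnimodalListing (t : α) (L : List α) : Prop where
  nodup : L.Nodup
  mem_iff : ∀ x, x ∈ L ↔ x ≤ t
  head?_eq : L.head? = some ⊥
  exists_split : ∃ U D, L = U ++ t :: D ∧ (U ++ [t]).Pairwise (· < ·) ∧ (t :: D).Pairwise (· > ·)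

def IsUnimodalCycle (t : α) (p : Perm α) : Prop :=
  ∃ L, IsUnimodalListing t L ∧ p = L.formPerm

theorem isUnimodalListing_bot_iff {L : List α} : IsUnimodalListing ⊥ L ↔ L = [⊥] := by
  refine ⟨fun ⟨_, _, _, U, D, hL, hU, hD⟩ => ?_, fun hL => ⟨?_, ?_, ?_, [], [], ?_⟩⟩
  · simp only [List.pairwise_append, List.pairwise_cons, List.mem_singleton, not_lt_bot] at hU hD
    rw [hL, List.eq_nil_iff_forall_not_mem.2 fun u hu => not_lt_bot (hU.2.2 u hu _ rfl),
      List.eq_nil_iff_forall_not_mem.2 hD.1]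
    rfl
  all_goals simp [hL]

theorem isUnimodalCycle_bot_iff {p : Perm α} : IsUnimodalCycle ⊥ p ↔ p = 1 := by
  simp [IsUnimodalCycle, isUnimodalListing_bot_iff]

theorem IsUnimodalListing.insert_after {L : List α} (hL : IsUnimodalListing t L) (hts : t ⋖ s) :
    ∃ L', IsUnimodalListing s L' ∧ L'.formPerm = L.formPerm * swap t s := by
  obtain ⟨hnd, hmem, hhead, U, D, rfl, hU, hD⟩ := hL
  have hsL : s ∉ U ++ t :: D := fun h => hts.lt.not_ge ((hmem s).1 h)
  have hnd' : (U ++ t :: s :: D).Nodup := by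
    rw [show U ++ t :: s :: D = (U ++ [t]) ++ s :: D by simp, List.nodup_middle]
    exact List.nodup_cons.2 ⟨by simpa using hsL, by simpa using hnd⟩
  have hlt : ∀ x ∈ U ++ t :: D, x < s := fun x hx => ((hmem x).1 hx).trans_lt hts.lt
  refine ⟨U ++ t :: s :: D, ⟨hnd', ?_, ?_, U ++ [t], D, by simp, ?_, ?_⟩,
    List.formPerm_append_cons_cons_eq_mul_swap hnd'⟩
  · simpa using hts.mem_append_cons_iff_le (A := U ++ [t]) (by simpa using hmem)
  · cases U <;> simpa using hhead
  · refine List.pairwise_append.2 ⟨hU, List.pairwise_singleton _ _, ?_⟩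
    simp only [List.mem_singleton, forall_eq]
    exact fun x hx => hlt x (by simp only [List.mem_append, List.mem_cons] at hx ⊢; tauto)
  · exact List.pairwise_cons.2 ⟨fun x hx => hlt x (by simp [hx]), (List.pairwise_cons.1 hD).2⟩

theorem IsUnimodalListing.insert_before {L : List α} (hL : IsUnimodalListing t L) (hts : t ⋖ s) :
    ∃ L', IsUnimodalListing s L' ∧ L'.formPerm = swap t s * L.formPerm := by
  by_cases ht : t = ⊥
  · -- `L = [⊥]`, where inserting `s` before or after `⊥` gives the same cycle
    subst ht
    obtain rfl := isUnimodalListing_bot_iff.1 hL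
    obtain ⟨L', hL', hp⟩ := hL.insert_after hts
    exact ⟨L', hL', by simpa using hp⟩
  obtain ⟨hnd, hmem, hhead, U, D, rfl, hU, hD⟩ := hL
  have hU0 : U ≠ [] := by rintro rfl; simp_all
  have hsL : s ∉ U ++ t :: D := fun h => hts.lt.not_ge ((hmem s).1 h)
  have hnd' : (U ++ s :: t :: D).Nodup := List.nodup_middle.2 (List.nodup_cons.2 ⟨hsL, hnd⟩)
  have hlt : ∀ x ∈ U ++ t :: D, x < s := fun x hx => ((hmem x).1 hx).trans_lt hts.lt
  refine ⟨U ++ s :: t :: D, ⟨hnd', hts.mem_append_cons_iff_le hmem, ?_, U, t :: D, rfl, ?_, ?_⟩,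
    List.formPerm_append_cons_cons_eq_swap_mul hnd'⟩
  · cases U <;> simp_all
  · refine List.pairwise_append.2 ⟨(List.pairwise_append.1 hU).1, List.pairwise_singleton _ _, ?_⟩
    simp only [List.mem_singleton, forall_eq]
    exact fun x hx => hlt x (by simp [hx])
  · exact List.pairwise_cons.2 ⟨fun x hx => hlt x (by simp [hx]), hD⟩

theorem IsUnimodalListing.remove_top {L : List α} (hL : IsUnimodalListing s L) (hts : t ⋖ s) :
    ∃ L', IsUnimodalListing t L' ∧
      (L.formPerm = swap t s * L'.formPerm ∨ L.formPerm = L'.formPerm * swap t s) := by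
  obtain ⟨hnd, hmem, hhead, U, D, rfl, hU, hD⟩ := hL
  have hUs : ∀ u ∈ U, u < s := fun u hu => hU.rel_of_mem_append hu (List.mem_singleton_self s)
  have hDs : ∀ d ∈ D, d < s := (List.pairwise_cons.1 hD).1
  rcases List.mem_append.1 ((hmem t).2 hts.le) with htU | htD
  · obtain ⟨U₁, U₂, rfl⟩ := List.append_of_mem htU
    obtain rfl : U₂ = [] := List.eq_nil_iff_forall_not_mem.2 fun u hu =>
      (hts.le_of_lt (hUs u (by simp [hu]))).not_gt
        (List.rel_of_pairwise_cons (List.pairwise_append.1 (List.pairwise_append.1 hU).1).2.1 hu)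
    rw [show U₁ ++ [t] ++ s :: D = U₁ ++ t :: s :: D by simp] at hnd hmem hhead ⊢
    refine ⟨U₁ ++ t :: D, ⟨hnd.sublist (by simp), ?_, ?_, U₁, D, rfl, ?_, ?_⟩,
      Or.inr (List.formPerm_append_cons_cons_eq_mul_swap hnd)⟩
    · simpa using hts.mem_append_iff_le (A := U₁ ++ [t]) (by simpa using hnd) (by simpa using hmem)
    · cases U₁ <;> simpa using hhead
    · simpa using (List.pairwise_append.1 hU).1
    · refine List.pairwise_cons.2 ⟨fun d hd => lt_of_le_of_ne (hts.le_of_lt (hDs d hd)) ?_,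
        (List.pairwise_cons.1 hD).2⟩
      rintro rfl
      exact (List.nodup_cons.1 (List.nodup_append.1 hnd).2.1).1 (List.mem_cons_of_mem s hd)
  · obtain ⟨D₁, D₂, rfl⟩ := List.append_of_mem ((List.mem_cons.1 htD).resolve_left hts.ne)
    obtain rfl : D₁ = [] := List.eq_nil_iff_forall_not_mem.2 fun d hd =>
      (hts.le_of_lt (hDs d (by simp [hd]))).not_gt
        ((List.pairwise_cons.1 hD).2.rel_of_mem_append hd List.mem_cons_self)
    have hU0 : U ≠ [] := by
      rintro rfl
      exact hts.lt.ne_bot (by simpa using hhead)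
    refine ⟨U ++ t :: D₂, ⟨hnd.sublist (by simp), hts.mem_append_iff_le hnd hmem, ?_, U, D₂, rfl,
      ?_, (List.pairwise_cons.1 hD).2⟩, Or.inl (List.formPerm_append_cons_cons_eq_swap_mul hnd)⟩
    · cases U <;> simp_all
    · refine List.pairwise_append.2 ⟨(List.pairwise_append.1 hU).1, List.pairwise_singleton _ _, ?_⟩
      simp only [List.mem_singleton, forall_eq]
      refine fun u hu => lt_of_le_of_ne (hts.le_of_lt (hUs u hu)) ?_
      rintro rfl
      exact (List.nodup_append.1 hnd).2.2 u hu u (by simp) rfl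

theorem isUnimodalCycle_iff_of_covBy (hts : t ⋖ s) {p : Perm α} :
    IsUnimodalCycle s p ↔ ∃ q, IsUnimodalCycle t q ∧ (p = swap t s * q ∨ p = q * swap t s) := by
  constructor
  · rintro ⟨L, hL, rfl⟩
    obtain ⟨L', hL', h⟩ := hL.remove_top hts
    exact ⟨_, ⟨L', hL', rfl⟩, h⟩
  · rintro ⟨_, ⟨L, hL, rfl⟩, rfl | rfl⟩
    · obtain ⟨L', hL', h⟩ := hL.insert_before hts
      exact ⟨L', hL', h.symm⟩
    · obtain ⟨L', hL', h⟩ := hL.insert_after hts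
      exact ⟨L', hL', h.symm⟩

end Unimodal

theorem Fin.castSucc_covBy_succ {n : ℕ} (i : Fin n) : i.castSucc ⋖ i.succ :=
  covBy_iff_lt_iff_le_left.2 Fin.le_castSucc_iff.symm

section Coxeter

variable {n : ℕ}

theorem commute_adjSwap_of_add_one_lt {i j : Fin n} (h : (j : ℕ) + 1 < i) :
    Commute (adjSwap n i) (adjSwap n j) := by
  refine (Perm.disjoint_swap_swap ?_).commute
  simp [Fin.ext_iff]
  omega

/-- `sᵢ` can be moved to an end of a word in `s₀, …, sᵢ₋₁`: to the right end if `sᵢ₋₁` occurs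
before it (then `sᵢ` commutes with all later letters), to the left end otherwise. -/
theorem prod_map_adjSwap_append_cons {i : Fin n} {l₁ l₂ : List (Fin n)} (hnd : (l₁ ++ l₂).Nodup)
    (hlt : ∀ j ∈ l₁ ++ l₂, j < i) :
    ((l₁ ++ i :: l₂).map (adjSwap n)).prod = adjSwap n i * ((l₁ ++ l₂).map (adjSwap n)).prod ∨
      ((l₁ ++ i :: l₂).map (adjSwap n)).prod = ((l₁ ++ l₂).map (adjSwap n)).prod * adjSwap n i := by
  simp only [List.map_append, List.map_cons]
  by_cases hc : ∃ j ∈ l₁, (j : ℕ) + 1 = i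
  · obtain ⟨j, hj, hji⟩ := hc
    refine Or.inr (List.prod_append_cons_eq_prod_mul ?_)
    simp only [List.mem_map]
    rintro _ ⟨k, hk, rfl⟩
    refine commute_adjSwap_of_add_one_lt ?_
    have hki : (k : ℕ) < i := hlt k (by simp [hk])
    have hkj : (k : ℕ) ≠ j := fun h => (List.nodup_append.1 hnd).2.2 j hj k hk (Fin.ext h.symm)
    omega
  · push Not at hc
    refine Or.inl (List.prod_append_cons_eq_mul_prod ?_)
    simp only [List.mem_map]
    rintro _ ⟨k, hk, rfl⟩
    refine commute_adjSwap_of_add_one_lt ?_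
    have hki : (k : ℕ) < i := hlt k (by simp [hk])
    have := hc k hk
    omega

def IsStdCoxeterUpTo (t : Fin (n+1)) (p : Perm (Fin (n+1))) : Prop :=
  ∃ l : List (Fin n), l.Nodup ∧ (∀ i, i ∈ l ↔ i.succ ≤ t) ∧ p = (l.map (adjSwap n)).prod

theorem isStdCoxeterUpTo_last_iff {p : Perm (Fin (n+1))} :
    IsStdCoxeterUpTo (Fin.last n) p ↔ IsStdCoxeter n p := by
  simp [IsStdCoxeterUpTo, IsStdCoxeter, Fin.le_last]

theorem isStdCoxeterUpTo_zero_iff {p : Perm (Fin (n+1))} : IsStdCoxeterUpTo 0 p ↔ p = 1 := by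
  constructor
  · rintro ⟨l, -, hl, rfl⟩
    rw [List.eq_nil_iff_forall_not_mem.2 fun i hi =>
      Fin.succ_ne_zero i (Fin.le_zero_iff.1 ((hl i).1 hi))]
    rfl
  · rintro rfl
    exact ⟨[], List.nodup_nil, fun i => by simp, rfl⟩

theorem isStdCoxeterUpTo_succ_iff (i : Fin n) {p : Perm (Fin (n+1))} :
    IsStdCoxeterUpTo i.succ p ↔
      ∃ q, IsStdCoxeterUpTo i.castSucc q ∧ (p = adjSwap n i * q ∨ p = q * adjSwap n i) := by
  simp only [IsStdCoxeterUpTo, Fin.succ_le_succ_iff, Fin.succ_le_castSucc_iff]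
  constructor
  · rintro ⟨l, hnd, hl, rfl⟩
    obtain ⟨l₁, l₂, rfl⟩ := List.append_of_mem ((hl i).2 le_rfl)
    have hl' : ∀ j, j ∈ l₁ ++ l₂ ↔ j < i := fun j => by
      rw [hnd.mem_append_iff_mem_append_cons, hl, lt_iff_le_and_ne]
    have hnd' : (l₁ ++ l₂).Nodup := hnd.sublist (by simp)
    exact ⟨_, ⟨l₁ ++ l₂, hnd', hl', rfl⟩,
      prod_map_adjSwap_append_cons hnd' fun j hj => (hl' j).1 hj⟩
  · rintro ⟨_, ⟨l, hnd, hl, rfl⟩, hp⟩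
    have hnd' : (i :: l).Nodup := List.nodup_cons.2 ⟨fun h => lt_irrefl i ((hl i).1 h), hnd⟩
    have hl' : ∀ j, j ∈ i :: l ↔ j ≤ i := by simp [hl, le_iff_eq_or_lt]
    rcases hp with rfl | rfl
    · exact ⟨i :: l, hnd', hl', by simp⟩
    · exact ⟨l ++ [i], List.nodup_append_comm.2 hnd', fun j => by simpa [or_comm] using hl' j,
        by simp⟩

theorem isStdCoxeterUpTo_iff_isUnimodalCycle (t : Fin (n+1)) {p : Perm (Fin (n+1))} :
    IsStdCoxeterUpTo t p ↔ IsUnimodalCycle t p := by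
  induction t using Fin.induction generalizing p with
  | zero => exact isStdCoxeterUpTo_zero_iff.trans isUnimodalCycle_bot_iff.symm
  | succ i ih =>
    rw [isStdCoxeterUpTo_succ_iff, isUnimodalCycle_iff_of_covBy i.castSucc_covBy_succ]
    simp only [ih, adjSwap]

end Coxeter

theorem isUnimodalListing_ofFn_iff {n : ℕ} (a : Fin (n+1) ≃ Fin (n+1)) :
    IsUnimodalListing (Fin.last n) (List.ofFn a) ↔
      a 0 = 0 ∧ ∃ m, a m = Fin.last n ∧ (∀ i j, i < j → j ≤ m → a i < a j) ∧
        (∀ i j, m ≤ i → i < j → a j < a i) := by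
  constructor
  · rintro ⟨-, -, hhead, hsplit⟩
    exact ⟨by simpa [List.ofFn_succ, bot_eq_zero] using hhead, List.exists_split_ofFn_iff.1 hsplit⟩
  · rintro ⟨h0, hsplit⟩
    refine ⟨List.nodup_ofFn.2 a.injective, fun x => ?_, by simp [List.ofFn_succ, h0, bot_eq_zero],
      List.exists_split_ofFn_iff.2 hsplit⟩
    exact ⟨fun _ => Fin.le_last x, fun _ => List.mem_ofFn.2 (a.surjective x)⟩

/-- A permutation `w` of `{1,…,n}` is a standard Coxeter element iff it is a single
`n`-cycle whose cycle notation `(a₁,…,aₙ)` starting at `a₁ = 1` (the least element)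
increases strictly up to the largest element `n` and then decreases strictly. -/
theorem stmt0 (n : ℕ) (w : Equiv.Perm (Fin (n+1))) :
    IsStdCoxeter n w ↔
      ∃ a : Fin (n+1) ≃ Fin (n+1), a 0 = 0 ∧ (∀ i, w (a i) = a (i + 1)) ∧
        ∃ m : Fin (n+1), a m = Fin.last n ∧
          (∀ i j : Fin (n+1), i < j → j ≤ m → a i < a j) ∧
          (∀ i j : Fin (n+1), m ≤ i → i < j → a j < a i) := by
  rw [← isStdCoxeterUpTo_last_iff, isStdCoxeterUpTo_iff_isUnimodalCycle]
  constructor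
  · rintro ⟨L, hL, rfl⟩
    obtain ⟨a, rfl⟩ := hL.nodup.exists_equiv_ofFn_eq fun x => (hL.mem_iff x).2 (Fin.le_last x)
    obtain ⟨h0, hsplit⟩ := (isUnimodalListing_ofFn_iff a).1 hL
    exact ⟨a, h0, List.formPerm_ofFn_apply a.injective, hsplit⟩
  · rintro ⟨a, h0, hw, hsplit⟩
    refine ⟨List.ofFn a, (isUnimodalListing_ofFn_iff a).2 ⟨h0, hsplit⟩, Equiv.ext fun x => ?_⟩
    obtain ⟨i, rfl⟩ := a.surjective x
    rw [hw, List.formPerm_ofFn_apply a.injective]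
end

section
/- Let c be a standard Coxeter element of S_n with cycle notation (a_1,...,a_m,...,a_n) where 1 = a_1 < ... < a_m = n and a_m > a_{m+1} > ... > a_n > 1; set L_c = {a_2,...,a_{m-1}} and R_c = {a_{m+1},...,a_n}. Let s_k = (k,k+1) be initial in c and c' = s_k c s_k. Then for all 1 < i < j < n, the root (i,j) is c-charmed if and only if either ((i,j) is c'-charmed and |{i,j} ∩ {k,k+1}| is even) or ((i,j) is c'-ordinary and |{i,j} ∩ {k,k+1}| is odd). -/
/-- The Coxeter length = number of inversions of a permutation. -/
def invLen {n : ℕ} (w : Equiv.Perm (Fin n)) : ℕ :=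
  (Finset.univ.filter fun p : Fin n × Fin n => p.1 < p.2 ∧ w p.2 < w p.1).card

/-- For a standard Coxeter element `c` with cycle notation increasing to the top and then
decreasing, an interior element `x` lies in `L_c` (the increasing part) iff `x < c x`, and
in `R_c` (the decreasing part) iff `c x < x`.  A root `(i,j)` with `1 < i < j < n` is
`c`-charmed iff one of `i, j` lies in `L_c` and the other in `R_c`. -/
def charmedRel (n : ℕ) (c : Equiv.Perm (Fin (n+1))) (i j : Fin (n+1)) : Prop :=
  (i < c i ∧ c j < j) ∨ (c i < i ∧ j < c j)

open Equiv

lemma List.notMem_of_nodup_middle {α : Type*} {U V : List α} {a : α}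
    (h : (U ++ a :: V).Nodup) : a ∉ U ∧ a ∉ V := by
  simpa using (List.nodup_cons.1 (List.nodup_middle.1 h)).1

lemma odd_card_pair_inter_iff {α : Type*} [DecidableEq α] {i j : α} (h : i ≠ j)
    (s : Finset α) : Odd ({i, j} ∩ s).card ↔ (i ∈ s ↔ j ∉ s) := by
  by_cases hi : i ∈ s <;> by_cases hj : j ∈ s <;>
    simp [Finset.insert_inter_of_mem, Finset.insert_inter_of_notMem, hi, hj, h]

section AdjSwap

variable {n : ℕ}

lemma adjSwap_apply_val (t : Fin n) (y : Fin (n+1)) :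
    (adjSwap n t y).val =
      if y.val = t.val then t.val + 1 else if y.val = t.val + 1 then t.val else y.val := by
  rw [adjSwap, swap_apply_def]
  split_ifs <;> simp_all [Fin.ext_iff]

@[simp]
lemma adjSwap_inv (t : Fin n) : (adjSwap n t)⁻¹ = adjSwap n t :=
  swap_inv _ _

lemma adjSwap_apply_of_ne {t : Fin n} {x : Fin (n+1)} (h₁ : t.castSucc ≠ x)
    (h₂ : t.succ ≠ x) : adjSwap n t x = x :=
  swap_apply_of_ne_of_ne h₁.symm h₂.symm

lemma adjSwap_apply_eq_self {t p q : Fin n} {x : Fin (n+1)} (hp : p.succ = x)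
    (hq : q.castSucc = x) (htp : t ≠ p) (htq : t ≠ q) : adjSwap n t x = x :=
  adjSwap_apply_of_ne (hq ▸ (Fin.castSucc_injective _).ne htq)
    (hp ▸ (Fin.succ_injective _).ne htp)

lemma adjSwap_le_castSucc_iff {t q : Fin n} (h : t ≠ q) (y : Fin (n+1)) :
    adjSwap n t y ≤ q.castSucc ↔ y ≤ q.castSucc := by
  have := Fin.val_ne_of_ne h
  simp only [Fin.le_def, Fin.val_castSucc, adjSwap_apply_val]
  split_ifs <;> omega

lemma adjSwap_lt_adjSwap (k : Fin n) {y z : Fin (n+1)} (h : y < z)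
    (hk : ¬(y = k.castSucc ∧ z = k.succ)) : adjSwap n k y < adjSwap n k z := by
  simp only [Fin.ext_iff, Fin.val_castSucc, Fin.val_succ] at hk
  simp only [Fin.lt_def, adjSwap_apply_val] at h ⊢
  split_ifs <;> omega

lemma lt_adjSwap_apply_iff {k : Fin n} {x : Fin (n+1)} (h₁ : x ≠ k.castSucc)
    (h₂ : x ≠ k.succ) (y : Fin (n+1)) : x < adjSwap n k y ↔ x < y := by
  simp only [ne_eq, Fin.ext_iff, Fin.val_castSucc, Fin.val_succ] at h₁ h₂
  simp only [Fin.lt_def, adjSwap_apply_val]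
  split_ifs <;> omega

lemma adjSwap_commute {t k : Fin n} (h : t ≠ k) (h₁ : t.succ ≠ k.castSucc)
    (h₂ : t.castSucc ≠ k.succ) : Commute (adjSwap n t) (adjSwap n k) := by
  have := Fin.val_ne_of_ne h
  simp only [ne_eq, Fin.ext_iff, Fin.val_castSucc, Fin.val_succ] at h₁ h₂
  refine (Perm.disjoint_swap_swap ?_).commute
  simp only [List.nodup_cons, List.mem_cons, List.not_mem_nil, List.nodup_nil, Fin.ext_iff,
    Fin.val_castSucc, Fin.val_succ, or_false, and_true, not_false_eq_true]
  omega

end AdjSwap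

def wordProd {n : ℕ} (l : List (Fin n)) : Perm (Fin (n+1)) :=
  (l.map (adjSwap n)).prod

section WordProd

variable {n : ℕ}

@[simp]
lemma wordProd_nil : wordProd ([] : List (Fin n)) = 1 := rfl

@[simp]
lemma wordProd_cons (t : Fin n) (l : List (Fin n)) :
    wordProd (t :: l) = adjSwap n t * wordProd l :=
  List.prod_cons

@[simp]
lemma wordProd_append (l₁ l₂ : List (Fin n)) :
    wordProd (l₁ ++ l₂) = wordProd l₁ * wordProd l₂ := by
  simp [wordProd]

lemma wordProd_reverse (l : List (Fin n)) : wordProd l.reverse = (wordProd l)⁻¹ := by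
  simp [wordProd, List.prod_inv_reverse, List.map_reverse, Function.comp_def]

lemma wordProd_apply_eq_self {l : List (Fin n)} {x : Fin (n+1)}
    (h : ∀ t ∈ l, adjSwap n t x = x) : wordProd l x = x := by
  induction l with
  | nil => rfl
  | cons t l ih =>
    simp only [List.forall_mem_cons] at h
    simp [ih h.2, h.1]

lemma wordProd_apply_le_castSucc_iff {l : List (Fin n)} {q : Fin n} (hq : q ∉ l)
    (y : Fin (n+1)) : wordProd l y ≤ q.castSucc ↔ y ≤ q.castSucc := by
  induction l with
  | nil => rfl
  | cons t l ih =>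
    simp only [List.mem_cons, not_or] at hq
    simp [adjSwap_le_castSucc_iff (Ne.symm hq.1), ih hq.2]

lemma wordProd_apply_lt_wordProd_apply {l : List (Fin n)} {q : Fin n} (hq : q ∉ l)
    {y z : Fin (n+1)} (hy : y ≤ q.castSucc) (hz : q.castSucc < z) :
    wordProd l y < wordProd l z :=
  lt_of_le_of_lt ((wordProd_apply_le_castSucc_iff hq y).2 hy)
    (lt_of_not_ge fun h => hz.not_ge ((wordProd_apply_le_castSucc_iff hq z).1 h))

lemma castSucc_lt_wordProd_apply {U V : List (Fin n)} {q : Fin n} (hU : q ∉ U)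
    (hV : ∀ t ∈ V, adjSwap n t q.castSucc = q.castSucc) :
    q.castSucc < wordProd (U ++ q :: V) q.castSucc := by
  have hs : adjSwap n q q.castSucc = q.succ := swap_apply_left _ _
  simp only [wordProd_append, wordProd_cons, Perm.mul_apply, wordProd_apply_eq_self hV, hs]
  exact lt_of_not_ge fun h =>
    Fin.castSucc_lt_succ.not_ge ((wordProd_apply_le_castSucc_iff hU _).1 h)

lemma wordProd_apply_succ_lt {U V : List (Fin n)} {p : Fin n} (hU : p ∉ U)
    (hV : ∀ t ∈ V, adjSwap n t p.succ = p.succ) :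
    wordProd (U ++ p :: V) p.succ < p.succ := by
  have hs : adjSwap n p p.succ = p.castSucc := swap_apply_right _ _
  simp only [wordProd_append, wordProd_cons, Perm.mul_apply, wordProd_apply_eq_self hV, hs]
  exact lt_of_le_of_lt ((wordProd_apply_le_castSucc_iff hU _).2 le_rfl) Fin.castSucc_lt_succ

end WordProd

section Coxeter

variable {n : ℕ}

lemma lt_wordProd_apply_or_lt {l : List (Fin n)} (hnd : l.Nodup) (hall : ∀ t, t ∈ l)
    {x : Fin (n+1)} (h0 : x ≠ 0) (hx : x ≠ Fin.last n) :
    x < wordProd l x ∨ wordProd l x < x := by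
  obtain ⟨p, rfl⟩ : ∃ p : Fin n, p.succ = x := ⟨x.pred h0, Fin.succ_pred x h0⟩
  obtain ⟨q, hq⟩ : ∃ q : Fin n, q.castSucc = p.succ := ⟨_, Fin.castSucc_castPred _ hx⟩
  have hpq : p ≠ q := by
    rintro rfl
    exact Fin.castSucc_lt_succ.ne hq
  have fix : ∀ t, t ≠ p → t ≠ q → adjSwap n t p.succ = p.succ :=
    fun t => adjSwap_apply_eq_self rfl hq
  obtain ⟨U, V, rfl⟩ := List.append_of_mem (hall p)
  have hpUV := List.notMem_of_nodup_middle hnd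
  rcases List.mem_append.1 (hall q) with hqU | hqpV
  · refine .inr (wordProd_apply_succ_lt hpUV.1 fun t ht => fix t ?_ ?_)
    · exact fun htp => hpUV.2 (htp ▸ ht)
    · rintro rfl
      exact List.disjoint_of_nodup_append hnd hqU (List.mem_cons_of_mem _ ht)
  · have hqV := (List.mem_cons.1 hqpV).resolve_left hpq.symm
    obtain ⟨V₁, V₂, rfl⟩ := List.append_of_mem hqV
    rw [show U ++ p :: (V₁ ++ q :: V₂) = (U ++ p :: V₁) ++ q :: V₂ by simp] at hnd ⊢
    have hqUV := List.notMem_of_nodup_middle hnd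
    refine .inl (hq ▸ castSucc_lt_wordProd_apply hqUV.1 fun t ht => hq ▸ fix t ?_ ?_)
    · rintro rfl
      exact hpUV.2 (List.mem_append_right _ (List.mem_cons_of_mem _ ht))
    · exact fun htq => hqUV.2 (htq ▸ ht)

lemma charmedRel_iff {c : Perm (Fin (n+1))} {i j : Fin (n+1)} (hi : i < c i ∨ c i < i)
    (hj : j < c j ∨ c j < j) : charmedRel n c i j ↔ (i < c i ↔ ¬ j < c j) := by
  unfold charmedRel
  have := @lt_asymm _ _ i (c i)
  have := @lt_asymm _ _ j (c j)
  tauto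

end Coxeter

section Descent

variable {n : ℕ}

lemma invLen_le_invLen_adjSwap_mul {c : Perm (Fin (n+1))} {k : Fin n}
    (h : c⁻¹ k.castSucc < c⁻¹ k.succ) : invLen c ≤ invLen (adjSwap n k * c) := by
  unfold invLen
  refine Finset.card_le_card fun p hp => ?_
  simp only [Finset.mem_filter, Finset.mem_univ, true_and] at hp
  refine Finset.mem_filter.2 ⟨Finset.mem_univ _, hp.1, adjSwap_lt_adjSwap k hp.2 ?_⟩
  rintro ⟨h₂, h₁⟩
  rw [← Perm.eq_inv_iff_eq] at h₁ h₂
  exact hp.1.not_gt (h₁ ▸ h₂ ▸ h)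

lemma inv_apply_succ_lt_of_invLen_lt {c : Perm (Fin (n+1))} {k : Fin n}
    (hk : invLen (adjSwap n k * c) < invLen c) : c⁻¹ k.succ < c⁻¹ k.castSucc :=
  lt_of_not_ge fun h => hk.not_ge <| invLen_le_invLen_adjSwap_mul <|
    h.lt_of_ne (c⁻¹.injective.ne Fin.castSucc_lt_succ.ne)

lemma inv_wordProd_apply (l₁ l₂ : List (Fin n)) (k : Fin n) (x : Fin (n+1)) :
    (wordProd (l₁ ++ k :: l₂))⁻¹ x =
      wordProd l₂.reverse (adjSwap n k (wordProd l₁.reverse x)) := by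
  simp [← wordProd_reverse]

variable {l₁ l₂ : List (Fin n)} {k : Fin n}

lemma inv_wordProd_apply_castSucc_lt_of_pred_mem (hnd : (l₁ ++ k :: l₂).Nodup) {p : Fin n}
    (hp : p ∈ l₁) (hpk : p.succ = k.castSucc) :
    (wordProd (l₁ ++ k :: l₂))⁻¹ k.castSucc <
      (wordProd (l₁ ++ k :: l₂))⁻¹ k.succ := by
  have hk := List.notMem_of_nodup_middle hnd
  have hpk' : p ≠ k := fun h => Fin.castSucc_lt_succ.ne (h ▸ hpk).symm
  have hR : wordProd l₁.reverse k.castSucc < k.castSucc := by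
    obtain ⟨m₁, m₂, rfl⟩ := List.append_of_mem hp
    have hpm := List.notMem_of_nodup_middle (List.nodup_append.1 hnd).1
    rw [← hpk]
    have fix : ∀ t ∈ m₁.reverse, adjSwap n t p.succ = p.succ := by
      refine fun t ht => adjSwap_apply_eq_self rfl hpk.symm ?_ ?_
      · rintro rfl
        exact hpm.1 (List.mem_reverse.1 ht)
      · rintro rfl
        exact hk.1 (List.mem_append_left _ (List.mem_reverse.1 ht))
    simpa using wordProd_apply_succ_lt (by simpa using hpm.2) fix
  have hR' : k.castSucc < wordProd l₁.reverse k.succ :=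
    lt_of_not_ge fun h => Fin.castSucc_lt_succ.not_ge
      ((wordProd_apply_le_castSucc_iff (by simpa using hk.1) _).1 h)
  rw [inv_wordProd_apply, inv_wordProd_apply]
  refine wordProd_apply_lt_wordProd_apply (q := p) ?_ ?_ ?_
  · simpa using fun h => List.disjoint_of_nodup_append hnd hp (List.mem_cons_of_mem _ h)
  all_goals
    simp only [Fin.lt_def, Fin.le_def, Fin.ext_iff, Fin.val_castSucc, Fin.val_succ,
      adjSwap_apply_val] at hR hR' hpk ⊢
    split_ifs <;> omega

lemma inv_wordProd_apply_castSucc_lt_of_succ_mem (hnd : (l₁ ++ k :: l₂).Nodup) {q : Fin n}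
    (hq : q ∈ l₁) (hqk : q.castSucc = k.succ) :
    (wordProd (l₁ ++ k :: l₂))⁻¹ k.castSucc <
      (wordProd (l₁ ++ k :: l₂))⁻¹ k.succ := by
  have hk := List.notMem_of_nodup_middle hnd
  have hR : k.succ < wordProd l₁.reverse k.succ := by
    obtain ⟨m₁, m₂, rfl⟩ := List.append_of_mem hq
    have hqm := List.notMem_of_nodup_middle (List.nodup_append.1 hnd).1
    rw [← hqk]
    have fix : ∀ t ∈ m₁.reverse, adjSwap n t q.castSucc = q.castSucc := by
      refine fun t ht => adjSwap_apply_eq_self hqk.symm rfl ?_ ?_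
      · rintro rfl
        exact hk.1 (List.mem_append_left _ (List.mem_reverse.1 ht))
      · rintro rfl
        exact hqm.1 (List.mem_reverse.1 ht)
    simpa using castSucc_lt_wordProd_apply (by simpa using hqm.2) fix
  have hR' : wordProd l₁.reverse k.castSucc ≤ k.castSucc :=
    (wordProd_apply_le_castSucc_iff (by simpa using hk.1) _).2 le_rfl
  rw [inv_wordProd_apply, inv_wordProd_apply]
  refine wordProd_apply_lt_wordProd_apply (q := q) ?_ ?_ ?_
  · simpa using fun h => List.disjoint_of_nodup_append hnd hq (List.mem_cons_of_mem _ h)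
  all_goals
    simp only [Fin.lt_def, Fin.le_def, Fin.ext_iff, Fin.val_castSucc, Fin.val_succ,
      adjSwap_apply_val] at hR hR' hqk ⊢
    split_ifs <;> omega

end Descent

section Conjugate

variable {n : ℕ} {l₁ l₂ : List (Fin n)} {k : Fin n}

lemma adjSwap_mul_wordProd_mul_adjSwap (hnd : (l₁ ++ k :: l₂).Nodup)
    (hsucc : ∀ t ∈ l₁, t.succ ≠ k.castSucc)
    (hcast : ∀ t ∈ l₁, t.castSucc ≠ k.succ) :
    adjSwap n k * wordProd (l₁ ++ k :: l₂) * adjSwap n k = wordProd (l₁ ++ l₂ ++ [k]) := by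
  have hcomm : Commute (adjSwap n k) (wordProd l₁) := by
    refine (Commute.list_prod_left _ _ fun s hs => ?_).symm
    obtain ⟨t, ht, rfl⟩ := List.mem_map.1 hs
    exact adjSwap_commute (fun h => (List.notMem_of_nodup_middle hnd).1 (h ▸ ht))
      (hsucc t ht) (hcast t ht)
  simp only [wordProd_append, wordProd_cons, wordProd_nil, mul_one]
  rw [← mul_assoc (adjSwap n k), hcomm.eq]
  simp [mul_assoc, adjSwap]

lemma wordProd_apply_castSucc_lt (hnd : (l₁ ++ k :: l₂).Nodup)
    (hall : ∀ t, t ∈ l₁ ++ k :: l₂) (hsucc : ∀ t ∈ l₁, t.succ ≠ k.castSucc)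
    (hk : k.castSucc ≠ 0) :
    wordProd (l₁ ++ k :: l₂) k.castSucc < k.castSucc := by
  obtain ⟨p, hp⟩ : ∃ p : Fin n, p.succ = k.castSucc := ⟨_, Fin.succ_pred _ hk⟩
  have hpk : p ≠ k := fun h => Fin.castSucc_lt_succ.ne (h ▸ hp).symm
  have hpl₂ : p ∈ l₂ := by
    rcases List.mem_append.1 (hall p) with h | h
    · exact absurd hp (hsucc p h)
    · exact (List.mem_cons.1 h).resolve_left hpk
  have hkl₂ := (List.notMem_of_nodup_middle hnd).2
  obtain ⟨m₁, m₂, rfl⟩ := List.append_of_mem hpl₂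
  rw [show l₁ ++ k :: (m₁ ++ p :: m₂) = (l₁ ++ k :: m₁) ++ p :: m₂ by simp] at hnd ⊢
  have hpUV := List.notMem_of_nodup_middle hnd
  rw [← hp]
  refine wordProd_apply_succ_lt hpUV.1 fun t ht => adjSwap_apply_eq_self rfl hp.symm ?_ ?_
  · exact fun htp => hpUV.2 (htp ▸ ht)
  · exact fun htk => hkl₂ (htk ▸ List.mem_append_right _ (List.mem_cons_of_mem _ ht))

lemma succ_lt_wordProd_apply_succ (hnd : (l₁ ++ k :: l₂).Nodup)
    (hall : ∀ t, t ∈ l₁ ++ k :: l₂) (hcast : ∀ t ∈ l₁, t.castSucc ≠ k.succ)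
    (hk : k.succ ≠ Fin.last n) :
    k.succ < wordProd (l₁ ++ k :: l₂) k.succ := by
  obtain ⟨q, hq⟩ : ∃ q : Fin n, q.castSucc = k.succ := ⟨_, Fin.castSucc_castPred _ hk⟩
  have hqk : q ≠ k := fun h => Fin.castSucc_lt_succ.ne (h ▸ hq)
  have hql₂ : q ∈ l₂ := by
    rcases List.mem_append.1 (hall q) with h | h
    · exact absurd hq (hcast q h)
    · exact (List.mem_cons.1 h).resolve_left hqk
  have hkl₂ := (List.notMem_of_nodup_middle hnd).2
  obtain ⟨m₁, m₂, rfl⟩ := List.append_of_mem hql₂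
  rw [show l₁ ++ k :: (m₁ ++ q :: m₂) = (l₁ ++ k :: m₁) ++ q :: m₂ by simp] at hnd ⊢
  have hqUV := List.notMem_of_nodup_middle hnd
  rw [← hq]
  refine castSucc_lt_wordProd_apply hqUV.1 fun t ht => adjSwap_apply_eq_self hq.symm rfl ?_ ?_
  · exact fun htk => hkl₂ (htk ▸ List.mem_append_right _ (List.mem_cons_of_mem _ ht))
  · exact fun htq => hqUV.2 (htq ▸ ht)

lemma lt_wordProd_rotate_apply_iff (hnd : (l₁ ++ k :: l₂).Nodup)
    (hall : ∀ t, t ∈ l₁ ++ k :: l₂) (hsucc : ∀ t ∈ l₁, t.succ ≠ k.castSucc)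
    (hcast : ∀ t ∈ l₁, t.castSucc ≠ k.succ) {x : Fin (n+1)} (h0 : x ≠ 0)
    (hx : x ≠ Fin.last n) :
    x < wordProd (l₁ ++ l₂ ++ [k]) x ↔
      (x < wordProd (l₁ ++ k :: l₂) x ↔
        x ∉ ({k.castSucc, k.succ} : Finset (Fin (n+1)))) := by
  have hk : k ∉ l₁ ++ l₂ := by simpa using List.notMem_of_nodup_middle hnd
  rcases eq_or_ne x k.castSucc with rfl | h₁
  · exact iff_of_true (castSucc_lt_wordProd_apply hk (V := []) (by simp))
      (iff_of_false (wordProd_apply_castSucc_lt hnd hall hsucc h0).not_gt (by simp))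
  rcases eq_or_ne x k.succ with rfl | h₂
  · exact iff_of_false (wordProd_apply_succ_lt hk (V := []) (by simp)).not_gt
      fun h => h.1 (succ_lt_wordProd_apply_succ hnd hall hcast hx) (by simp)
  rw [← adjSwap_mul_wordProd_mul_adjSwap hnd hsucc hcast]
  simp [adjSwap_apply_of_ne h₁.symm h₂.symm, lt_adjSwap_apply_iff h₁ h₂, h₁, h₂]

lemma charmedRel_wordProd_rotate_iff (hnd : (l₁ ++ k :: l₂).Nodup)
    (hall : ∀ t, t ∈ l₁ ++ k :: l₂) (hsucc : ∀ t ∈ l₁, t.succ ≠ k.castSucc)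
    (hcast : ∀ t ∈ l₁, t.castSucc ≠ k.succ) {i j : Fin (n+1)} (hi : 0 < i) (hij : i < j)
    (hj : j < Fin.last n) :
    charmedRel n (wordProd (l₁ ++ l₂ ++ [k])) i j ↔
      (charmedRel n (wordProd (l₁ ++ k :: l₂)) i j ↔
        Even (({i, j} ∩ {k.castSucc, k.succ} : Finset (Fin (n+1))).card)) := by
  have hperm : (l₁ ++ l₂ ++ [k]).Perm (l₁ ++ k :: l₂) :=
    (List.perm_append_singleton _ _).trans List.perm_middle.symm
  have hnd' := hperm.nodup_iff.2 hnd
  have hall' : ∀ t, t ∈ l₁ ++ l₂ ++ [k] := fun t => hperm.mem_iff.2 (hall t)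
  have hi₀ := hi.ne'
  have hj₀ := (hi.trans hij).ne'
  have hiₙ := (hij.trans hj).ne
  have hjₙ := hj.ne
  rw [charmedRel_iff (lt_wordProd_apply_or_lt hnd hall hi₀ hiₙ)
      (lt_wordProd_apply_or_lt hnd hall hj₀ hjₙ),
    charmedRel_iff (lt_wordProd_apply_or_lt hnd' hall' hi₀ hiₙ)
      (lt_wordProd_apply_or_lt hnd' hall' hj₀ hjₙ),
    lt_wordProd_rotate_apply_iff hnd hall hsucc hcast hi₀ hiₙ,
    lt_wordProd_rotate_apply_iff hnd hall hsucc hcast hj₀ hjₙ,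
    ← Nat.not_odd_iff_even, odd_card_pair_inter_iff hij.ne]
  generalize (i ∈ ({k.castSucc, k.succ} : Finset (Fin (n+1)))) = A,
    (j ∈ ({k.castSucc, k.succ} : Finset (Fin (n+1)))) = B,
    (i < wordProd (l₁ ++ k :: l₂) i) = P, (j < wordProd (l₁ ++ k :: l₂) j) = Q
  by_cases A <;> by_cases B <;> by_cases P <;> by_cases Q <;> simp_all

end Conjugate

/-- Relation between `c`-charmed and `c'`-charmed roots for `c' = s_k c s_k`,
`s_k` initial in `c`. -/
theorem stmt3 (n : ℕ) (c : Equiv.Perm (Fin (n+1))) (hc : IsStdCoxeter n c)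
    (k : Fin n) (hk : invLen (adjSwap n k * c) < invLen c) :
    ∀ i j : Fin (n+1), 0 < i → i < j → j < Fin.last n →
      (charmedRel n c i j ↔
        ((charmedRel n (adjSwap n k * c * adjSwap n k) i j ∧
            Even (({i, j} ∩ {k.castSucc, k.succ} : Finset (Fin (n+1))).card)) ∨
         (¬ charmedRel n (adjSwap n k * c * adjSwap n k) i j ∧
            Odd (({i, j} ∩ {k.castSucc, k.succ} : Finset (Fin (n+1))).card)))) := by
  obtain ⟨l, hnd, hall, hcl⟩ := hc
  obtain rfl : c = wordProd l := hcl
  have hinit := inv_apply_succ_lt_of_invLen_lt hk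
  obtain ⟨l₁, l₂, rfl⟩ := List.append_of_mem (hall k)
  -- an initial `s_k` commutes with every letter to its left
  have hsucc : ∀ t ∈ l₁, t.succ ≠ k.castSucc := fun t ht h =>
    (inv_wordProd_apply_castSucc_lt_of_pred_mem hnd ht h).not_gt hinit
  have hcast : ∀ t ∈ l₁, t.castSucc ≠ k.succ := fun t ht h =>
    (inv_wordProd_apply_castSucc_lt_of_succ_mem hnd ht h).not_gt hinit
  intro i j hi hij hj
  rw [adjSwap_mul_wordProd_mul_adjSwap hnd hsucc hcast,
    charmedRel_wordProd_rotate_iff hnd hall hsucc hcast hi hij hj, ← Nat.not_odd_iff_even]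
  by_cases Odd ({i, j} ∩ {k.castSucc, k.succ} : Finset (Fin (n+1))).card <;> simp [*]
end

section
/- Let W be a finite Coxeter group, c a Coxeter element, and NC(W,c) the interval [e,c] in the absolute order on W. The Kreweras complement Krew_c defined by Krew_c(w) = w^{-1} c is a bijection from NC(W,c) to itself, and it is order-reversing: if v ≤_T w in NC(W,c) then Krew_c(w) ≤_T Krew_c(v). -/
/-- `c` is a standard Coxeter element of the Coxeter system `cs`. -/
def IsStdCox {B W : Type*} [Group W] {M : CoxeterMatrix B} (cs : CoxeterSystem M W)
    (c : W) : Prop :=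
  ∃ l : List B, l.Nodup ∧ (∀ i, i ∈ l) ∧ c = cs.wordProd l

/-- The absolute (reflection) length of `w`: the minimal number of reflections whose
product is `w`. -/
noncomputable def absLenT {B W : Type*} [Group W] {M : CoxeterMatrix B}
    (cs : CoxeterSystem M W) (w : W) : ℕ :=
  sInf {k | ∃ l : List W, l.length = k ∧ (∀ t ∈ l, cs.IsReflection t) ∧ w = l.prod}

/-- The absolute order on `W`. -/
def absLeT {B W : Type*} [Group W] {M : CoxeterMatrix B} (cs : CoxeterSystem M W)
    (v w : W) : Prop :=
  absLenT cs w = absLenT cs v + absLenT cs (v⁻¹ * w)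

section Aux

variable {B W : Type*} [Group W] {M : CoxeterMatrix B} (cs : CoxeterSystem M W)

lemma absLenT_set_nonempty (w : W) :
    {k | ∃ l : List W, l.length = k ∧ (∀ t ∈ l, cs.IsReflection t) ∧ w = l.prod}.Nonempty := by
  obtain ⟨l, rfl⟩ := cs.wordProd_surjective w
  refine ⟨(l.map cs.simple).length, l.map cs.simple, rfl, ?_, ?_⟩
  · rintro t ht
    obtain ⟨i, _, rfl⟩ := List.mem_map.mp ht
    exact cs.isReflection_simple i
  · simp [CoxeterSystem.wordProd]

lemma absLenT_spec (w : W) :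
    ∃ l : List W, l.length = absLenT cs w ∧ (∀ t ∈ l, cs.IsReflection t) ∧ w = l.prod :=
  Nat.sInf_mem (absLenT_set_nonempty cs w)

lemma absLenT_le {w : W} {l : List W} (hl : ∀ t ∈ l, cs.IsReflection t) (hw : w = l.prod) :
    absLenT cs w ≤ l.length :=
  Nat.sInf_le ⟨l, rfl, hl, hw⟩

lemma conj_list_prod {W : Type*} [Group W] (u : W) (l : List W) :
    u * l.prod * u⁻¹ = (l.map (fun t => u * t * u⁻¹)).prod := by
  induction l with
  | nil => simp
  | cons a l ih => simp only [List.prod_cons, List.map_cons]; rw [← ih]; group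

lemma absLenT_conj_le (w u : W) : absLenT cs (u * w * u⁻¹) ≤ absLenT cs w := by
  obtain ⟨l, hlen, hrefl, rfl⟩ := absLenT_spec cs w
  have hle := absLenT_le cs (w := u * l.prod * u⁻¹) (l := l.map (fun t => u * t * u⁻¹))
    (by rintro t ht; obtain ⟨s, hs, rfl⟩ := List.mem_map.mp ht; exact (hrefl s hs).conj u)
    (conj_list_prod u l)
  simpa [hlen] using hle

lemma absLenT_conj (w u : W) : absLenT cs (u * w * u⁻¹) = absLenT cs w := by
  refine le_antisymm (absLenT_conj_le cs w u) ?_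
  have := absLenT_conj_le cs (u * w * u⁻¹) u⁻¹
  simpa [mul_assoc] using this

end Aux

/-- The Kreweras complement `w ↦ w⁻¹ c` is a bijection from `NC(W,c) = [e,c]_T` to itself,
and it is order-reversing for the absolute order. -/
theorem stmt5 {B W : Type*} [Fintype B] [Group W] [Finite W]
    {M : CoxeterMatrix B} (cs : CoxeterSystem M W) (c : W) (hc : IsStdCox cs c) :
    Set.BijOn (fun w => w⁻¹ * c) {w | absLeT cs w c} {w | absLeT cs w c} ∧
    ∀ v w, absLeT cs v c → absLeT cs w c → absLeT cs v w →
      absLeT cs (w⁻¹ * c) (v⁻¹ * c) := by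
  have key : ∀ w : W, absLenT cs (c⁻¹ * w * c) = absLenT cs w := by
    intro w
    have := absLenT_conj cs w c⁻¹
    simpa using this
  have maps : ∀ w : W, absLeT cs w c → absLeT cs (w⁻¹ * c) c := by
    intro w hw
    unfold absLeT at *
    have h1 : (w⁻¹ * c)⁻¹ * c = c⁻¹ * w * c := by group
    rw [h1, key w, Nat.add_comm]
    exact hw
  constructor
  · refine ⟨maps, ?_, ?_⟩
    · intro x _ y _ h
      simp only at h
      exact inv_injective (mul_right_cancel h)
    · intro u hu
      refine ⟨c * u⁻¹, ?_, by group⟩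
      simp only [Set.mem_setOf_eq] at hu ⊢
      unfold absLeT at *
      have h1 : (c * u⁻¹)⁻¹ * c = u := by group
      have h2 : absLenT cs (c * u⁻¹) = absLenT cs (u⁻¹ * c) := by
        have h3 : c * u⁻¹ = c * (u⁻¹ * c) * c⁻¹ := by group
        rw [h3, absLenT_conj]
      rw [h1, h2, Nat.add_comm]
      exact hu
  · intro v w hv hw hvw
    unfold absLeT at *
    have h1 : (w⁻¹ * c)⁻¹ * (v⁻¹ * c) = c⁻¹ * (w * v⁻¹) * c := by group
    rw [h1, key]
    have h2 : absLenT cs (w * v⁻¹) = absLenT cs (v⁻¹ * w) := by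
      have : w * v⁻¹ = w * (v⁻¹ * w) * w⁻¹ := by group
      rw [this, absLenT_conj]
    rw [h2]
    omega
end

section
/- For a finite poset P and elements x, y ∈ P such that x does not cover y and y does not cover x, the toggles t_x and t_y on the set of order ideals J(P) commute: t_x ∘ t_y = t_y ∘ t_x. -/
open Classical in
/-- The toggle at `x`: add `x` to `I` if `x ∉ I` and the result is an order ideal,
remove `x` if `x ∈ I` and the result is an order ideal, otherwise do nothing. -/
noncomputable def toggle {P : Type*} [PartialOrder P] (x : P) (I : Set P) : Set P :=
  if x ∉ I ∧ IsLowerSet (insert x I) then insert x I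
  else if x ∈ I ∧ IsLowerSet (I \ {x}) then I \ {x}
  else I

section Aux

variable {P : Type*} [PartialOrder P]

lemma lowerInsert {J : Set P} {y : P} (hJ : IsLowerSet J) :
    IsLowerSet (insert y J) ↔ ∀ z, z < y → z ∈ J := by
  constructor
  · intro h z hz
    have := h hz.le (Set.mem_insert y J)
    rcases this with rfl | hm
    · exact absurd hz (lt_irrefl _)
    · exact hm
  · intro h a b hba ha
    rcases ha with rfl | ha
    · rcases eq_or_lt_of_le hba with rfl | h'
      · exact Set.mem_insert _ _
      · exact Set.mem_insert_of_mem _ (h _ h')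
    · exact Set.mem_insert_of_mem _ (hJ hba ha)

lemma lowerDiff {J : Set P} {y : P} (hJ : IsLowerSet J) :
    IsLowerSet (J \ {y}) ↔ ∀ z, y < z → z ∉ J := by
  constructor
  · intro h z hz hzJ
    have hm : z ∈ J \ {y} := ⟨hzJ, ne_of_gt hz⟩
    have := h hz.le hm
    exact this.2 rfl
  · rintro h a b hba ⟨haJ, hay⟩
    refine ⟨hJ hba haJ, ?_⟩
    rintro rfl
    exact h a (lt_of_le_of_ne hba (fun he => hay he.symm)) haJ

lemma toggle_lower {x : P} {I : Set P} (hI : IsLowerSet I) : IsLowerSet (toggle x I) := by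
  unfold toggle
  split_ifs with h1 h2
  · exact h1.2
  · exact h2.2
  · exact hI

lemma toggle_mem_ne {x p : P} {I : Set P} (hpx : p ≠ x) :
    p ∈ toggle x I ↔ p ∈ I := by
  unfold toggle
  split_ifs with h1 h2
  · simp [Set.mem_insert_iff, hpx]
  · simp [hpx]
  · rfl

lemma mem_toggle_self {y : P} {J : Set P} (hJ : IsLowerSet J) :
    y ∈ toggle y J ↔ (y ∉ J ∧ ∀ z, z < y → z ∈ J) ∨ (y ∈ J ∧ ¬ ∀ z, y < z → z ∉ J) := by
  have hA := lowerInsert (J := J) (y := y) hJ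
  have hR := lowerDiff (J := J) (y := y) hJ
  unfold toggle
  split_ifs with h1 h2
  · simp only [Set.mem_insert_iff, true_or]
    constructor
    · intro _; exact Or.inl ⟨h1.1, hA.mp h1.2⟩
    · intro _; trivial
  · simp only [Set.mem_diff, Set.mem_singleton_iff, not_true, and_false, false_iff]
    rintro (⟨hy, _⟩ | ⟨_, hnr⟩)
    · exact hy h2.1
    · exact hnr (hR.mp h2.2)
  · rw [hA] at h1; rw [hR] at h2; tauto

lemma toggle_eq_self_of_mem {x w : P} {I : Set P} (hx : x ∈ I) (hw : x < w) (hwI : w ∈ I) :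
    toggle x I = I := by
  unfold toggle
  rw [if_neg (by tauto), if_neg]
  rintro ⟨-, hlow⟩
  have hm : w ∈ I \ {x} := ⟨hwI, ne_of_gt hw⟩
  exact (hlow hw.le hm).2 rfl

lemma toggle_eq_self_of_not_mem {x w : P} {I : Set P} (hx : x ∉ I) (hw : w < x) (hwI : w ∉ I) :
    toggle x I = I := by
  unfold toggle
  rw [if_neg, if_neg (by tauto)]
  rintro ⟨-, hlow⟩
  have := hlow hw.le (Set.mem_insert x I)
  rcases this with rfl | hm
  · exact absurd hw (lt_irrefl _)
  · exact hwI hm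

/-- The condition "all elements below `y` are in the set" is unchanged by toggling `x`,
provided `x` does not cover... rather is not covered: `¬ x ⋖ y`. -/
lemma keyA {x y : P} {I : Set P} (hI : IsLowerSet I) (hxy : ¬ x ⋖ y) :
    (∀ z, z < y → z ∈ toggle x I) ↔ (∀ z, z < y → z ∈ I) := by
  by_cases hlt : x < y
  · obtain ⟨w, hxw, hwy⟩ := (not_covBy_iff hlt).mp hxy
    constructor
    · intro h
      have hwJ : w ∈ toggle x I := h w hwy
      have hwI : w ∈ I := (toggle_mem_ne (ne_of_gt hxw)).mp hwJ
      have hxI : x ∈ I := hI hxw.le hwI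
      rwa [toggle_eq_self_of_mem hxI hxw hwI] at h
    · intro h
      have hwI : w ∈ I := h w hwy
      have hxI : x ∈ I := hI hxw.le hwI
      rw [toggle_eq_self_of_mem hxI hxw hwI]
      exact h
  · constructor <;> intro h z hz <;>
      have hzx : z ≠ x := by rintro rfl; exact hlt hz
    · exact (toggle_mem_ne hzx).mp (h z hz)
    · exact (toggle_mem_ne hzx).mpr (h z hz)

/-- The condition "no element above `y` is in the set" is unchanged by toggling `x`,
provided `¬ y ⋖ x`. -/
lemma keyB {x y : P} {I : Set P} (hI : IsLowerSet I) (hyx : ¬ y ⋖ x) :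
    (∀ z, y < z → z ∉ toggle x I) ↔ (∀ z, y < z → z ∉ I) := by
  by_cases hlt : y < x
  · obtain ⟨w, hyw, hwx⟩ := (not_covBy_iff hlt).mp hyx
    constructor
    · intro h
      have hwJ : w ∉ toggle x I := h w hyw
      have hwI : w ∉ I := fun hm => hwJ ((toggle_mem_ne (ne_of_lt hwx)).mpr hm)
      have hxI : x ∉ I := fun hm => hwI (hI hwx.le hm)
      rwa [toggle_eq_self_of_not_mem hxI hwx hwI] at h
    · intro h
      have hwI : w ∉ I := h w hyw
      have hxI : x ∉ I := h x (hyw.trans hwx)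
      rw [toggle_eq_self_of_not_mem hxI hwx hwI]
      exact h
  · constructor <;> intro h z hz <;>
      have hzx : z ≠ x := by rintro rfl; exact hlt hz
    · exact fun hm => h z hz ((toggle_mem_ne hzx).mpr hm)
    · exact fun hm => h z hz ((toggle_mem_ne hzx).mp hm)

/-- Key step: toggling `x` does not change whether `y` ends up in the set after toggling `y`. -/
lemma toggle_self_toggle {x y : P} {I : Set P} (hI : IsLowerSet I) (hne : y ≠ x)
    (hxy : ¬ x ⋖ y) (hyx : ¬ y ⋖ x) :
    (y ∈ toggle y (toggle x I) ↔ y ∈ toggle y I) := by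
  rw [mem_toggle_self (toggle_lower hI), mem_toggle_self hI,
    toggle_mem_ne hne, keyA hI hxy, keyB hI hyx]

end Aux

/-- For a finite poset `P`, if `x` does not cover `y` and `y` does not cover `x`,
then the toggles `t_x` and `t_y` commute on order ideals of `P`. -/
theorem stmt9 {P : Type*} [PartialOrder P] [Fintype P] (x y : P)
    (hxy : ¬ x ⋖ y) (hyx : ¬ y ⋖ x) :
    ∀ I : Set P, IsLowerSet I → toggle x (toggle y I) = toggle y (toggle x I) := by
  intro I hI
  by_cases hne : x = y
  · subst hne; rfl
  ext p
  by_cases hpx : p = x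
  · subst hpx
    rw [toggle_mem_ne hne, toggle_self_toggle hI hne hyx hxy]
  · by_cases hpy : p = y
    · subst hpy
      rw [toggle_mem_ne (Ne.symm hne),
        toggle_self_toggle hI (Ne.symm hne) hxy hyx]
    · rw [toggle_mem_ne hpx, toggle_mem_ne hpy, toggle_mem_ne hpy, toggle_mem_ne hpx]
end

section
/- For any n ≥ 1, the number of order ideals of the type A_{n-1} positive root poset equals the Catalan number C_n = (1/(n+1)) binom(2n, n). -/
/-!
An order ideal `I` is determined by its columns: the roots `(i, j) ∈ I` with fixed `j` are those
with `c j ≤ i`, for some `c j ≤ j`, and `I` is down-closed exactly when `j ↦ c j` is weakly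
increasing. So order ideals correspond to weakly increasing sequences with `c j ≤ j` (Dyck
paths in disguise). Such a sequence of length `n + 1` splits at its last fixed point `k` into a
sequence of length `k` and, after shifting down by `k`, one of length `n - k`; this is the
Catalan recurrence.
-/

open Finset

@[ext]
structure SubdiagonalSeq (n : ℕ) where
  toFun : Fin n → ℕ
  monotone : Monotone toFun
  le_self : ∀ j, toFun j ≤ j

namespace SubdiagonalSeq

variable {n : ℕ}

instance : CoeFun (SubdiagonalSeq n) fun _ => Fin n → ℕ := ⟨toFun⟩

instance : Finite (SubdiagonalSeq n) :=
  Finite.of_injective (fun c j => (⟨c j, (c.le_self j).trans_lt j.isLt⟩ : Fin n))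
    fun _ _ h => SubdiagonalSeq.ext <| funext fun j => congrArg Fin.val (congrFun h j)

instance : Unique (SubdiagonalSeq 0) where
  default := ⟨finZeroElim, fun j => j.elim0, fun j => j.elim0⟩
  uniq _ := SubdiagonalSeq.ext <| funext fun j => j.elim0

theorem apply_zero (c : SubdiagonalSeq (n + 1)) : c 0 = 0 :=
  Nat.le_zero.mp (c.le_self 0)

def take (c : SubdiagonalSeq n) (k : ℕ) (hk : k ≤ n) : SubdiagonalSeq k where
  toFun j := c (Fin.castLE hk j)
  monotone := c.monotone.comp (Fin.strictMono_castLE hk).monotone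
  le_self _ := c.le_self _

def drop (c : SubdiagonalSeq (n + 1)) (k : Fin (n + 1)) (hk : ∀ j, k < j → c j < j) :
    SubdiagonalSeq (n - k) where
  toFun i := c ⟨(k : ℕ) + 1 + i, by omega⟩ - k
  monotone i i' h := by
    refine Nat.sub_le_sub_right (c.monotone ?_) _
    rw [Fin.le_def] at h ⊢
    dsimp only
    omega
  le_self i := by
    have := hk ⟨(k : ℕ) + 1 + i, by omega⟩ (Fin.lt_def.mpr (by dsimp only; omega))
    dsimp only at this ⊢
    omega

def lastFixedPoint (c : SubdiagonalSeq (n + 1)) : Fin (n + 1) :=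
  (univ.filter fun j => c j = j).max' ⟨0, by simp [c.apply_zero]⟩

theorem le_lastFixedPoint {c : SubdiagonalSeq (n + 1)} {j : Fin (n + 1)} (hj : c j = j) :
    j ≤ c.lastFixedPoint :=
  le_max' _ _ (by simp [hj])

theorem apply_lastFixedPoint (c : SubdiagonalSeq (n + 1)) :
    c c.lastFixedPoint = c.lastFixedPoint :=
  (mem_filter.mp (max'_mem (univ.filter fun j => c j = j) _)).2

theorem apply_lt_of_lastFixedPoint_lt {c : SubdiagonalSeq (n + 1)} {j : Fin (n + 1)}
    (hj : c.lastFixedPoint < j) : c j < j :=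
  (c.le_self j).lt_of_ne fun h => hj.not_ge (le_lastFixedPoint h)

section Join

variable (k : Fin (n + 1)) (a : SubdiagonalSeq k) (b : SubdiagonalSeq (n - k))

def joinFun (j : Fin (n + 1)) : ℕ :=
  if h : (j : ℕ) < k then a ⟨j, h⟩
  else if h' : (j : ℕ) = k then k
  else k + b ⟨j - k - 1, by omega⟩

variable {k a b} {j : Fin (n + 1)}

theorem joinFun_of_lt (h : (j : ℕ) < k) : joinFun k a b j = a ⟨j, h⟩ := dif_pos h

theorem joinFun_of_eq (h : (j : ℕ) = k) : joinFun k a b j = k := by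
  simp [joinFun, h]

theorem joinFun_of_gt (h : (k : ℕ) < j) :
    joinFun k a b j = k + b ⟨j - k - 1, by omega⟩ := by
  simp [joinFun, h.not_gt, h.ne']

theorem joinFun_castLE (i : Fin k) : joinFun k a b (Fin.castLE (by omega) i) = a i :=
  joinFun_of_lt i.isLt

theorem joinFun_add_succ (i : Fin (n - k)) : joinFun k a b ⟨k + 1 + i, by omega⟩ = k + b i := by
  rw [joinFun_of_gt (by dsimp only; omega)]
  congr 3
  dsimp only
  omega

theorem joinFun_le_self (j : Fin (n + 1)) : joinFun k a b j ≤ j := by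
  rcases lt_trichotomy (j : ℕ) k with h | h | h
  · rw [joinFun_of_lt h]; exact a.le_self _
  · rw [joinFun_of_eq h]; omega
  · rw [joinFun_of_gt h]; have := b.le_self ⟨j - k - 1, by omega⟩; dsimp only at this; omega

theorem joinFun_lt_self (h : (k : ℕ) < j) : joinFun k a b j < j := by
  rw [joinFun_of_gt h]; have := b.le_self ⟨j - k - 1, by omega⟩; dsimp only at this; omega

theorem joinFun_monotone : Monotone (joinFun k a b) := by
  intro x y hxy
  rw [Fin.le_def] at hxy
  rcases lt_trichotomy (y : ℕ) k with hy | hy | hy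
  · rw [joinFun_of_lt (hxy.trans_lt hy), joinFun_of_lt hy]
    exact a.monotone (Fin.mk_le_mk.mpr hxy)
  · rw [joinFun_of_eq hy]
    exact (joinFun_le_self x).trans (by omega)
  · rcases lt_or_ge (k : ℕ) x with hx | hx
    · rw [joinFun_of_gt hx, joinFun_of_gt hy]
      have := b.monotone
        (show (⟨x - k - 1, by omega⟩ : Fin (n - k)) ≤ ⟨y - k - 1, by omega⟩ from
          Fin.mk_le_mk.mpr (by omega))
      omega
    · rw [joinFun_of_gt hy]
      exact (joinFun_le_self x).trans (by omega)

variable (k a b)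

def join : SubdiagonalSeq (n + 1) := ⟨joinFun k a b, joinFun_monotone, joinFun_le_self⟩

theorem lastFixedPoint_join : (join k a b).lastFixedPoint = k := by
  refine le_antisymm ?_ (le_lastFixedPoint (joinFun_of_eq rfl))
  by_contra! h
  exact (joinFun_lt_self h).ne (apply_lastFixedPoint (join k a b))

end Join

theorem join_injective :
    Function.Injective fun x : Σ k : Fin (n + 1), SubdiagonalSeq k × SubdiagonalSeq (n - k) =>
      join x.1 x.2.1 x.2.2 := by
  rintro ⟨k, a, b⟩ ⟨k', a', b'⟩ h
  obtain rfl : k = k' := by simpa only [lastFixedPoint_join] using congrArg lastFixedPoint h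
  have hfun : joinFun k a b = joinFun k a' b' := congrArg toFun h
  obtain rfl : a = a' := by
    ext i
    simpa only [joinFun_castLE] using congrFun hfun (Fin.castLE (by omega) i)
  obtain rfl : b = b' := by
    ext i
    simpa only [joinFun_add_succ, Nat.add_left_cancel_iff] using
      congrFun hfun ⟨k + 1 + i, by omega⟩
  rfl

theorem join_take_drop (c : SubdiagonalSeq (n + 1)) :
    join c.lastFixedPoint (c.take c.lastFixedPoint (by omega))
      (c.drop c.lastFixedPoint fun _ => apply_lt_of_lastFixedPoint_lt) = c := by
  ext j
  change joinFun _ _ _ j = c j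
  rcases lt_trichotomy (j : ℕ) c.lastFixedPoint with h | h | h
  · rw [joinFun_of_lt h]; rfl
  · rw [joinFun_of_eq h, Fin.ext h, apply_lastFixedPoint]
  · have hmono := c.monotone h.le
    rw [apply_lastFixedPoint] at hmono
    obtain ⟨i, hi⟩ :
        ∃ i : Fin (n - c.lastFixedPoint), ⟨c.lastFixedPoint + 1 + i, by omega⟩ = j :=
      ⟨⟨j - c.lastFixedPoint - 1, by omega⟩, Fin.ext (by dsimp only; omega)⟩
    rw [← hi] at hmono
    rw [← hi, joinFun_add_succ]
    change _ + (c _ - _) = _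
    omega

theorem join_bijective :
    Function.Bijective fun x : Σ k : Fin (n + 1), SubdiagonalSeq k × SubdiagonalSeq (n - k) =>
      join x.1 x.2.1 x.2.2 :=
  ⟨join_injective, fun c => ⟨⟨_, _, _⟩, join_take_drop c⟩⟩

theorem card_succ (n : ℕ) :
    Nat.card (SubdiagonalSeq (n + 1)) =
      ∑ k : Fin (n + 1), Nat.card (SubdiagonalSeq k) * Nat.card (SubdiagonalSeq (n - k)) := by
  rw [← Nat.card_eq_of_bijective _ join_bijective, Nat.card_sigma]
  simp only [Nat.card_prod]

theorem card_eq_catalan (n : ℕ) : Nat.card (SubdiagonalSeq n) = catalan n := by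
  induction n using Nat.strong_induction_on with
  | _ n ih =>
    cases n with
    | zero => rw [Nat.card_unique, catalan_zero]
    | succ n =>
      rw [card_succ, catalan_succ]
      exact sum_congr rfl fun k _ => by rw [ih k (by omega), ih (n - k) (by omega)]

end SubdiagonalSeq

abbrev PositiveRoot (n : ℕ) := {p : Fin n × Fin n // p.1 < p.2}

def IsOrderIdeal {n : ℕ} (I : Finset (PositiveRoot n)) : Prop :=
  ∀ a ∈ I, ∀ b : PositiveRoot n, a.1.1 ≤ b.1.1 → b.1.2 ≤ a.1.2 → b ∈ I

namespace SubdiagonalSeq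

variable {n : ℕ}

def toIdeal (c : SubdiagonalSeq n) : Finset (PositiveRoot n) :=
  univ.filter fun p => c p.1.2 ≤ p.1.1

theorem mem_toIdeal {c : SubdiagonalSeq n} {p : PositiveRoot n} :
    p ∈ c.toIdeal ↔ c p.1.2 ≤ p.1.1 := by
  simp [toIdeal]

theorem isOrderIdeal_toIdeal (c : SubdiagonalSeq n) : IsOrderIdeal c.toIdeal := by
  intro a ha b hi hj
  rw [mem_toIdeal] at ha ⊢
  calc c b.1.2 ≤ c a.1.2 := c.monotone hj
    _ ≤ a.1.1 := ha
    _ ≤ b.1.1 := hi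

theorem le_of_toIdeal_subset {c c' : SubdiagonalSeq n} (h : c.toIdeal ⊆ c'.toIdeal) (j : Fin n) :
    c' j ≤ c j := by
  rcases (c.le_self j).lt_or_eq with hlt | heq
  · have hmem : (⟨(⟨c j, hlt.trans j.isLt⟩, j), hlt⟩ : PositiveRoot n) ∈ c.toIdeal :=
      mem_toIdeal.mpr le_rfl
    exact mem_toIdeal.mp (h hmem)
  · exact heq ▸ c'.le_self j

theorem toIdeal_injective : Function.Injective (toIdeal : SubdiagonalSeq n → _) :=
  fun _ _ h => SubdiagonalSeq.ext <| funext fun j =>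
    le_antisymm (le_of_toIdeal_subset h.ge j) (le_of_toIdeal_subset h.le j)

end SubdiagonalSeq

namespace IsOrderIdeal

variable {n : ℕ}

def boundary (I : Finset (PositiveRoot n)) (j : Fin n) : ℕ :=
  (insert (j : ℕ) ((I.filter (·.1.2 = j)).image (·.1.1.val))).min' (insert_nonempty _ _)

variable {I : Finset (PositiveRoot n)}

theorem boundary_le_self (j : Fin n) : boundary I j ≤ j :=
  min'_le _ _ (mem_insert_self _ _)

theorem boundary_le_of_mem {p : PositiveRoot n} (hp : p ∈ I) : boundary I p.1.2 ≤ p.1.1 := by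
  unfold boundary
  apply min'_le
  apply mem_insert_of_mem
  apply mem_image_of_mem (fun q : PositiveRoot n => q.1.1.val)
  exact mem_filter.mpr ⟨hp, rfl⟩

theorem exists_mem_of_boundary_lt {j : Fin n} (h : boundary I j < j) :
    ∃ p ∈ I, p.1.2 = j ∧ (p.1.1 : ℕ) = boundary I j := by
  obtain h' | h' := mem_insert.mp (min'_mem (insert (j : ℕ)
    ((I.filter (·.1.2 = j)).image (·.1.1.val))) (insert_nonempty _ _))
  · exact absurd h' (by rw [boundary] at h; omega)
  · obtain ⟨p, hp, hv⟩ := mem_image.mp h'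
    exact ⟨p, (mem_filter.mp hp).1, (mem_filter.mp hp).2, hv⟩

theorem boundary_monotone (hI : IsOrderIdeal I) : Monotone (boundary I) := by
  intro j j' hjj'
  rcases lt_or_ge (boundary I j') j with hlt | hge
  · obtain ⟨p, hp, hpj, hv⟩ := exists_mem_of_boundary_lt (hlt.trans_le hjj')
    have hq : p.1.1 < j := by rw [Fin.lt_def]; omega
    have hmem : (⟨(p.1.1, j), hq⟩ : PositiveRoot n) ∈ I :=
      hI p hp _ le_rfl (by rw [hpj]; exact hjj')
    have := boundary_le_of_mem hmem
    dsimp only at this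
    omega
  · exact (boundary_le_self j).trans hge

def toSubdiagonalSeq (hI : IsOrderIdeal I) : SubdiagonalSeq n :=
  ⟨boundary I, boundary_monotone hI, boundary_le_self⟩

theorem toIdeal_toSubdiagonalSeq (hI : IsOrderIdeal I) : hI.toSubdiagonalSeq.toIdeal = I := by
  ext p
  refine SubdiagonalSeq.mem_toIdeal.trans ⟨fun h => ?_, boundary_le_of_mem⟩
  change boundary I p.1.2 ≤ p.1.1 at h
  obtain ⟨q, hq, hqj, hv⟩ := exists_mem_of_boundary_lt (h.trans_lt p.2)
  exact hI q hq p (by rw [Fin.le_def]; omega) hqj.ge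

end IsOrderIdeal

theorem SubdiagonalSeq.toIdeal_bijective {n : ℕ} :
    Function.Bijective fun c : SubdiagonalSeq n =>
      (⟨c.toIdeal, c.isOrderIdeal_toIdeal⟩ : {I : Finset (PositiveRoot n) // IsOrderIdeal I}) :=
  ⟨fun _ _ h => toIdeal_injective (congrArg Subtype.val h),
    fun I => ⟨I.2.toSubdiagonalSeq, Subtype.ext I.2.toIdeal_toSubdiagonalSeq⟩⟩

theorem stmt12_general (n : ℕ) :
    (Finset.univ.filter fun I : Finset {p : Fin n × Fin n // p.1 < p.2} =>
        ∀ a ∈ I, ∀ b : {p : Fin n × Fin n // p.1 < p.2},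
          a.1.1 ≤ b.1.1 → b.1.2 ≤ a.1.2 → b ∈ I).card
      = catalan n := by
  rw [← Fintype.card_subtype, Fintype.card_eq_nat_card]
  exact (Nat.card_eq_of_bijective _ SubdiagonalSeq.toIdeal_bijective).symm.trans
    (SubdiagonalSeq.card_eq_catalan n)

/-- The number of order ideals of the type `A_{n-1}` positive root poset
(pairs `(i,j)`, `i < j`, with `(i,j) ≤ (i',j')` iff `i' ≤ i` and `j ≤ j'`)
is the Catalan number `Cₙ`. -/
theorem stmt12 (n : ℕ) (hn : 1 ≤ n) :
    (Finset.univ.filter fun I : Finset {p : Fin n × Fin n // p.1 < p.2} =>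
        ∀ a ∈ I, ∀ b : {p : Fin n × Fin n // p.1 < p.2},
          a.1.1 ≤ b.1.1 → b.1.2 ≤ a.1.2 → b ∈ I).card
      = catalan n :=
  stmt12_general n
end

section
/- For any n ≥ 1, the cardinality of NC(S_n, c), the interval [e, c] in the absolute order on S_n for a standard Coxeter element c, equals the Catalan number C_n = (1/(n+1)) binom(2n, n). -/
/-- The absolute (reflection) length of a permutation. -/
noncomputable def absLen {n : ℕ} (w : Equiv.Perm (Fin n)) : ℕ :=
  sInf {k | ∃ l : List (Equiv.Perm (Fin n)), l.length = k ∧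
    (∀ t ∈ l, ∃ a b, a ≠ b ∧ t = Equiv.swap a b) ∧ w = l.prod}

/-- The absolute order. -/
def absLe {n : ℕ} (v w : Equiv.Perm (Fin n)) : Prop :=
  absLen w = absLen v + absLen (v⁻¹ * w)

/-!
Multiplying `w` by a transposition `(a b)` splits the cycle of `w` through `a` and `b`, or merges
the two cycles through them. Hence the absolute length is `#support - #cycles`, and every letter of
a reduced transposition word of `w` moves two points of one cycle of `w`; so for disjoint `c₁`,
`c₂` the interval `[e, c₁ c₂]` is `[e, c₁] × [e, c₂]`.

For a cycle `c` of length `s + 1` and a point `x` it moves, sort the `w ≤ c` by the value `w x`.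
Those fixing `x` form the interval of the `s`-cycle obtained from `c` by deleting `x`. Those with
`w x = c^(i+1) x`, `i < s`, correspond under left multiplication by `t = (x, c^(i+1) x)` to the
elements fixing `x` below `t c`, which is the product of a cycle of length `i + 1` through `x` and a
disjoint cycle of length `s - i`; there are `C_i C_(s-i)` of them. Summing over `i` is Catalan's
recurrence. Finally, a standard Coxeter element of `S_(n+1)` is an `(n+1)`-cycle, since each of its
`n` factors `s_i` merges two cycles: the other factors preserve `{0, …, i}`.
-/

open Finset

namespace Equiv.Perm

variable {α : Type*}

lemma SameCycle.mem_of_mapsTo [Finite α] {w : Perm α} {S : Set α} (hS : ∀ x ∈ S, w x ∈ S)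
    {a b : α} (h : w.SameCycle a b) (ha : a ∈ S) : b ∈ S := by
  obtain ⟨k, -, rfl⟩ := h.exists_pow_eq'
  clear h
  induction k with
  | zero => exact ha
  | succ k ih => rw [pow_succ', mul_apply]; exact hS _ ih

variable [DecidableEq α]

lemma pow_swap_mul_apply {w : Perm α} {a b x : α} {k : ℕ}
    (h : ∀ j, 0 < j → j ≤ k → (w ^ j) x ≠ a ∧ (w ^ j) x ≠ b) :
    ((swap a b * w) ^ k) x = (w ^ k) x := by
  induction k with
  | zero => rfl
  | succ k ih =>
    obtain ⟨ha, hb⟩ := h (k + 1) k.succ_pos le_rfl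
    rw [pow_succ', mul_apply, ih fun j hj hjk => h j hj (hjk.trans k.le_succ), mul_apply,
      ← mul_apply w, ← pow_succ', swap_apply_of_ne_of_ne ha hb]

lemma pow_succ_swap_mul_apply {w : Perm α} {a b x : α} {k : ℕ}
    (h : ∀ j, 0 < j → j ≤ k → (w ^ j) x ≠ a ∧ (w ^ j) x ≠ b) :
    ((swap a b * w) ^ (k + 1)) x = swap a b ((w ^ (k + 1)) x) := by
  rw [pow_succ', mul_apply, pow_swap_mul_apply h, mul_apply, ← mul_apply w, ← pow_succ']

variable [Fintype α]

/-! ### Absolute length -/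

/-- The absolute length: `#α` minus the number of cycles, fixed points included. -/
def reflLength (w : Perm α) : ℕ := #w.support - w.cycleType.card

lemma two_mul_card_cycleType_le (w : Perm α) : 2 * w.cycleType.card ≤ #w.support := by
  rw [← sum_cycleType, mul_comm, ← smul_eq_mul]
  exact Multiset.card_nsmul_le_sum fun _ => two_le_of_mem_cycleType

lemma card_cycleType_add_reflLength (w : Perm α) :
    w.cycleType.card + reflLength w = #w.support := by
  have := two_mul_card_cycleType_le w
  unfold reflLength; omega

@[simp] lemma reflLength_one : reflLength (1 : Perm α) = 0 := by simp [reflLength]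

lemma reflLength_eq_zero_iff {w : Perm α} : reflLength w = 0 ↔ w = 1 := by
  refine ⟨fun h => ?_, by rintro rfl; simp⟩
  have := card_cycleType_add_reflLength w
  have := two_mul_card_cycleType_le w
  exact card_cycleType_eq_zero.mp (by omega)

lemma IsCycle.reflLength_add_one {w : Perm α} (hw : w.IsCycle) :
    reflLength w + 1 = #w.support := by
  have := card_cycleType_add_reflLength w
  rw [card_cycleType_eq_one.mpr hw] at this
  omega

lemma reflLength_swap {a b : α} (hab : a ≠ b) : reflLength (swap a b) = 1 := by
  have := (isCycle_swap hab).reflLength_add_one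
  rw [card_support_swap hab] at this
  omega

lemma reflLength_conj (σ w : Perm α) : reflLength (σ * w * σ⁻¹) = reflLength w := by
  simp only [reflLength, cycleType_conj, card_support_conj]

lemma Disjoint.reflLength_mul {u v : Perm α} (h : u.Disjoint v) :
    reflLength (u * v) = reflLength u + reflLength v := by
  have hu := card_cycleType_add_reflLength u
  have hv := card_cycleType_add_reflLength v
  have huv := card_cycleType_add_reflLength (u * v)
  rw [h.cycleType_mul, h.support_mul, card_union_of_disjoint h.disjoint_support,
    Multiset.card_add] at huv
  omega

lemma isCycle_or_eq_one_of_card_support_le {w : Perm α} (h : #w.support ≤ reflLength w + 1) :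
    w.IsCycle ∨ w = 1 := by
  have := card_cycleType_add_reflLength w
  rcases Nat.le_one_iff_eq_zero_or_eq_one.mp (show w.cycleType.card ≤ 1 by omega) with h0 | h1
  · exact .inr (card_cycleType_eq_zero.mp h0)
  · exact .inl (card_cycleType_eq_one.mp h1)

lemma sign_eq_neg_one_pow_reflLength (w : Perm α) : sign w = (-1) ^ reflLength w := by
  have := card_cycleType_add_reflLength w
  rw [sign_of_cycleType, sum_cycleType, ← this, add_comm _ (reflLength w), add_assoc, pow_add,
    ← two_mul, pow_mul]
  simp

lemma reflLength_mul_add_one_le {σ z : Perm α} {S : Finset α} (hσ : σ.support ⊆ S)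
    (hS : _root_.Disjoint S z.support) (hne : S.Nonempty) :
    reflLength (σ * z) + 1 ≤ #S + reflLength z := by
  rw [(disjoint_iff_disjoint_support.mpr (hS.mono_left hσ)).reflLength_mul]
  rcases eq_or_ne σ 1 with rfl | h1
  · simpa using hne.card_pos
  · have := card_cycleType_add_reflLength σ
    have := card_le_card hσ
    have : σ.cycleType ≠ 0 := by rwa [Ne, cycleType_eq_zero]
    have := Multiset.card_pos.mpr this
    omega

lemma cycleOf_inv_mul_apply (w : Perm α) (x y : α) :
    ((w.cycleOf x)⁻¹ * w) y = if w.SameCycle x y then y else w y := by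
  rw [mul_apply, inv_eq_iff_eq]
  split_ifs with h
  · exact h.cycleOf_apply.symm
  · exact (cycleOf_apply_of_not_sameCycle fun h' =>
      h (h'.trans (sameCycle_apply_right.mpr (SameCycle.refl _ y)).symm)).symm

lemma cycleOf_inv_mul_apply_self (w : Perm α) (x : α) : ((w.cycleOf x)⁻¹ * w) x = x := by
  simp [cycleOf_inv_mul_apply, SameCycle.refl]

lemma disjoint_cycleOf_inv_mul (w : Perm α) (x : α) :
    (w.cycleOf x).Disjoint ((w.cycleOf x)⁻¹ * w) := by
  intro y
  rw [cycleOf_inv_mul_apply]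
  by_cases h : w.SameCycle x y
  · exact .inr (if_pos h)
  · exact .inl (cycleOf_apply_of_not_sameCycle h)

lemma support_cycleOf_inv_mul_subset (w : Perm α) (x : α) :
    ((w.cycleOf x)⁻¹ * w).support ⊆ w.support := by
  intro y hy
  rw [mem_support, cycleOf_inv_mul_apply] at hy
  split_ifs at hy
  exacts [absurd rfl hy, mem_support.mpr hy]

lemma reflLength_cycleOf_add (w : Perm α) (x : α) :
    reflLength (w.cycleOf x) + reflLength ((w.cycleOf x)⁻¹ * w) = reflLength w := by
  rw [← (disjoint_cycleOf_inv_mul w x).reflLength_mul, mul_inv_cancel_left]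

/-- `insert x (w.cycleOf x).support` is the orbit of `x` under `w`, also when `w x = x`. -/
lemma card_insert_support_cycleOf (w : Perm α) (x : α) :
    #(insert x (w.cycleOf x).support) = reflLength (w.cycleOf x) + 1 := by
  by_cases hx : w x = x
  · simp [(cycleOf_eq_one_iff w).mpr hx]
  · rw [insert_eq_of_mem (mem_support_cycleOf_iff.mpr ⟨.rfl, mem_support.mpr hx⟩),
      (isCycle_cycleOf w hx).reflLength_add_one]

lemma pow_apply_eq_self_iff_dvd (w : Perm α) (x : α) (n : ℕ) :
    (w ^ n) x = x ↔ #(insert x (w.cycleOf x).support) ∣ n := by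
  by_cases hx : w x = x
  · simp [(cycleOf_eq_one_iff w).mpr hx, pow_apply_eq_self_of_apply_eq_self hx]
  · rw [insert_eq_of_mem (mem_support_cycleOf_iff.mpr ⟨.rfl, mem_support.mpr hx⟩)]
    exact (isCycleOn_support_cycleOf w x).pow_apply_eq
      (mem_support_cycleOf_iff.mpr ⟨.rfl, mem_support.mpr hx⟩)

lemma SameCycle.mem_support_of_ne {w : Perm α} {a b : α} (h : w.SameCycle a b) (hab : a ≠ b) :
    a ∈ w.support := by
  by_contra ha
  exact hab (h.eq_of_left (notMem_support.mp ha))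

/-! ### Multiplying by a transposition -/

lemma reflLength_swap_mul_le_of_sameCycle {w : Perm α} {a b : α} (h : w.SameCycle a b) :
    reflLength (swap a b * w) ≤ reflLength w := by
  rcases eq_or_ne a b with rfl | hab
  · rw [swap_self, ← Perm.one_def, one_mul]
  have ha : a ∈ (w.cycleOf a).support :=
    mem_support_cycleOf_iff.mpr ⟨.rfl, h.mem_support_of_ne hab⟩
  have hb : b ∈ (w.cycleOf a).support := mem_support_cycleOf_iff.mpr ⟨h, h.mem_support_of_ne hab⟩
  have hsub : (swap a b * w.cycleOf a).support ⊆ (w.cycleOf a).support := by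
    refine (support_mul_le _ _).trans (sup_le ?_ le_rfl)
    rw [support_swap hab]
    exact insert_subset ha (singleton_subset_iff.mpr hb)
  have := reflLength_mul_add_one_le hsub (disjoint_cycleOf_inv_mul w a).disjoint_support ⟨a, ha⟩
  rw [mul_assoc, mul_inv_cancel_left, ← card_insert_of_mem ha, card_insert_support_cycleOf]
    at this
  have := reflLength_cycleOf_add w a
  omega

lemma reflLength_swap_mul_le (w : Perm α) (a b : α) :
    reflLength (swap a b * w) ≤ reflLength w + 1 := by
  rcases eq_or_ne a b with rfl | hab
  · rw [swap_self, ← Perm.one_def, one_mul]; omega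
  have := reflLength_cycleOf_add w a
  have := reflLength_cycleOf_add ((w.cycleOf a)⁻¹ * w) b
  have := card_insert_support_cycleOf w a
  have := card_insert_support_cycleOf ((w.cycleOf a)⁻¹ * w) b
  set γ := w.cycleOf a
  set z := γ⁻¹ * w
  set δ := z.cycleOf b
  set r := δ⁻¹ * z
  -- `swap a b` only touches the cycles of `w` through `a` and `b`; `r` is the rest of `w`.
  have hrz : r.support ⊆ z.support := support_cycleOf_inv_mul_subset z b
  have hγz := (disjoint_cycleOf_inv_mul w a).disjoint_support
  have hδr := (disjoint_cycleOf_inv_mul z b).disjoint_support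
  have hS : _root_.Disjoint (insert a γ.support ∪ insert b δ.support) r.support := by
    simp only [disjoint_union_left, disjoint_insert_left, mem_support, not_not]
    refine ⟨⟨?_, hγz.mono_right hrz⟩, cycleOf_inv_mul_apply_self z b, hδr⟩
    rw [← notMem_support]
    exact fun h => mem_support.mp (hrz h) (cycleOf_inv_mul_apply_self w a)
  have hσ : (swap a b * γ * δ).support ⊆ insert a γ.support ∪ insert b δ.support := by
    refine (support_mul_le _ _).trans (sup_le ((support_mul_le _ _).trans (sup_le ?_ ?_)) ?_)
    · rw [support_swap hab]
      simp [insert_subset_iff]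
    · exact (subset_insert _ _).trans subset_union_left
    · exact (subset_insert _ _).trans subset_union_right
  have := reflLength_mul_add_one_le hσ hS ⟨a, by simp⟩
  rw [mul_assoc, mul_assoc, mul_inv_cancel_left, mul_inv_cancel_left] at this
  have := card_union_le (insert a γ.support) (insert b δ.support)
  omega

lemma reflLength_swap_mul_ne (w : Perm α) {a b : α} (hab : a ≠ b) :
    reflLength (swap a b * w) ≠ reflLength w := by
  intro h
  have := congrArg sign (swap_mul_self_mul a b w)
  rw [sign_mul, sign_swap hab, sign_eq_neg_one_pow_reflLength, h, sign_eq_neg_one_pow_reflLength,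
    neg_one_mul] at this
  exact units_ne_neg_self _ this.symm

lemma SameCycle.reflLength_swap_mul {w : Perm α} {a b : α} (h : w.SameCycle a b) (hab : a ≠ b) :
    reflLength (swap a b * w) + 1 = reflLength w := by
  have := reflLength_swap_mul_le (swap a b * w) a b
  rw [swap_mul_self_mul] at this
  have := reflLength_swap_mul_le_of_sameCycle h
  have := reflLength_swap_mul_ne w hab
  omega

lemma sameCycle_swap_mul_of_not_sameCycle {w : Perm α} {a b : α} (h : ¬w.SameCycle a b) :
    (swap a b * w).SameCycle a b := by
  obtain ⟨k, hk⟩ : ∃ k, #(insert a (w.cycleOf a).support) = k + 1 :=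
    ⟨_, card_insert_support_cycleOf w a⟩
  have hne : ∀ j, 0 < j → j ≤ k → (w ^ j) a ≠ a ∧ (w ^ j) a ≠ b := fun j hj hjk =>
    ⟨fun he => by
      have := Nat.le_of_dvd hj ((pow_apply_eq_self_iff_dvd w a j).mp he)
      omega,
     fun he => h ⟨j, by simpa using he⟩⟩
  refine ⟨(k + 1 : ℕ), ?_⟩
  rw [zpow_natCast, pow_succ_swap_mul_apply hne, ← hk,
    (pow_apply_eq_self_iff_dvd w a _).mpr dvd_rfl, swap_apply_left]

lemma reflLength_swap_mul_of_not_sameCycle {w : Perm α} {a b : α} (h : ¬w.SameCycle a b) :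
    reflLength (swap a b * w) = reflLength w + 1 := by
  have := (sameCycle_swap_mul_of_not_sameCycle h).reflLength_swap_mul fun hab => h (hab ▸ .rfl)
  rw [swap_mul_self_mul] at this
  omega

lemma SameCycle.swap_mul {w : Perm α} {a b x y : α} (hn : ¬w.SameCycle a b)
    (h : w.SameCycle x y) : (swap a b * w).SameCycle x y := by
  have hab := sameCycle_swap_mul_of_not_sameCycle hn
  have step : ∀ z, (swap a b * w).SameCycle z (w z) := fun z => by
    have hz : (swap a b * w).SameCycle z (swap a b (w z)) := ⟨1, by simp⟩
    by_cases ha : w z = a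
    · rw [ha, swap_apply_left] at hz; rw [ha]; exact hz.trans hab.symm
    by_cases hb : w z = b
    · rw [hb, swap_apply_right] at hz; rw [hb]; exact hz.trans hab
    rwa [swap_apply_of_ne_of_ne ha hb] at hz
  obtain ⟨k, -, rfl⟩ := h.exists_pow_eq'
  clear h
  induction k with
  | zero => exact .rfl
  | succ k ih => rw [pow_succ', mul_apply]; exact ih.trans (step _)

lemma reflLength_swap_mul_self_apply {w : Perm α} {x : α} (hx : w x ≠ x) :
    reflLength (swap x (w x) * w) + 1 = reflLength w :=
  (sameCycle_apply_right.mpr (SameCycle.refl w x)).reflLength_swap_mul hx.symm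

/-! ### Reduced words -/

lemma reflLength_prod_le (l : List (Perm α)) (hl : ∀ t ∈ l, t.IsSwap) :
    reflLength l.prod ≤ l.length := by
  induction l with
  | nil => simp
  | cons t l ih =>
    obtain ⟨a, b, -, rfl⟩ := hl t List.mem_cons_self
    have := reflLength_swap_mul_le l.prod a b
    have := ih fun u hu => hl u (List.mem_cons_of_mem _ hu)
    simp only [List.prod_cons, List.length_cons]
    omega

lemma exists_swap_word (w : Perm α) :
    ∃ l : List (Perm α), (∀ t ∈ l, t.IsSwap) ∧ l.prod = w ∧ l.length = reflLength w := by
  induction hn : reflLength w generalizing w with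
  | zero => exact ⟨[], by simp, (reflLength_eq_zero_iff.mp hn).symm, rfl⟩
  | succ n ih =>
    obtain ⟨x, hx⟩ : ∃ x, w x ≠ x := by
      by_contra! h
      rw [show w = 1 from Perm.ext h, reflLength_one] at hn
      exact n.succ_ne_zero hn.symm
    have := reflLength_swap_mul_self_apply hx
    obtain ⟨l, hl, hprod, hlen⟩ := ih (swap x (w x) * w) (by omega)
    exact ⟨swap x (w x) :: l, List.forall_mem_cons.mpr ⟨⟨x, w x, hx.symm, rfl⟩, hl⟩,
      by rw [List.prod_cons, hprod, swap_mul_self_mul], by simpa⟩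

lemma absLen_eq_reflLength {N : ℕ} (w : Perm (Fin N)) : absLen w = reflLength w := by
  obtain ⟨l, hl, hprod, hlen⟩ := exists_swap_word w
  have hmem : reflLength w ∈ {k | ∃ l : List (Perm (Fin N)), l.length = k ∧
      (∀ t ∈ l, ∃ a b, a ≠ b ∧ t = swap a b) ∧ w = l.prod} := ⟨l, hlen, hl, hprod.symm⟩
  refine le_antisymm (Nat.sInf_le hmem) ?_
  obtain ⟨l', hlen', hl', hw⟩ := Nat.sInf_mem ⟨_, hmem⟩
  unfold absLen
  rw [← hlen', hw]
  exact reflLength_prod_le l' hl'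

lemma reflLength_mul_le (u v : Perm α) : reflLength (u * v) ≤ reflLength u + reflLength v := by
  obtain ⟨l₁, hl₁, rfl, hlen₁⟩ := exists_swap_word u
  obtain ⟨l₂, hl₂, rfl, hlen₂⟩ := exists_swap_word v
  rw [← List.prod_append, ← hlen₁, ← hlen₂, ← List.length_append]
  exact reflLength_prod_le _ fun t ht => (List.mem_append.mp ht).elim (hl₁ t) (hl₂ t)

lemma sameCycle_of_mem_reduced_word {l : List (Perm α)} (hl : ∀ t ∈ l, t.IsSwap)
    (hred : reflLength l.prod = l.length) :
    ∀ t ∈ l, ∃ a b, a ≠ b ∧ l.prod.SameCycle a b ∧ t = swap a b := by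
  induction l with
  | nil => simp
  | cons t l ih =>
    obtain ⟨a₀, b₀, hab₀, rfl⟩ := hl _ List.mem_cons_self
    have hl' : ∀ u ∈ l, u.IsSwap := fun u hu => hl u (List.mem_cons_of_mem _ hu)
    have := reflLength_prod_le l hl'
    have := reflLength_swap_mul_le l.prod a₀ b₀
    simp only [List.prod_cons, List.length_cons] at hred ⊢
    have hmerge : ¬l.prod.SameCycle a₀ b₀ := fun h => by
      have := h.reflLength_swap_mul hab₀
      omega
    intro u hu
    rcases List.mem_cons.mp hu with rfl | hu
    · exact ⟨a₀, b₀, hab₀, sameCycle_swap_mul_of_not_sameCycle hmerge, rfl⟩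
    · obtain ⟨a, b, hab, hsc, rfl⟩ := ih hl' (by omega) _ hu
      exact ⟨a, b, hab, hsc.swap_mul hmerge, rfl⟩

/-! ### The absolute order -/

def AbsLE (v w : Perm α) : Prop := reflLength w = reflLength v + reflLength (v⁻¹ * w)

instance : DecidableRel (AbsLE (α := α)) := fun _ _ => inferInstanceAs (Decidable (_ = _))

lemma absLe_iff_absLE {N : ℕ} {v w : Perm (Fin N)} : absLe v w ↔ AbsLE v w := by
  simp only [absLe, AbsLE, absLen_eq_reflLength]

lemma AbsLE.trans {u v w : Perm α} (h₁ : AbsLE u v) (h₂ : AbsLE v w) : AbsLE u w := by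
  unfold AbsLE at *
  have := reflLength_mul_le (u⁻¹ * v) (v⁻¹ * w)
  have := reflLength_mul_le u (u⁻¹ * w)
  rw [mul_assoc, mul_inv_cancel_left] at *
  omega

lemma absLE_one_iff {w : Perm α} : AbsLE w 1 ↔ w = 1 := by
  refine ⟨fun h => reflLength_eq_zero_iff.mp ?_, by rintro rfl; simp [AbsLE]⟩
  unfold AbsLE at h
  rw [reflLength_one] at h
  omega

lemma AbsLE.inv_mul {v w : Perm α} (h : AbsLE v w) : AbsLE (v⁻¹ * w) w := by
  unfold AbsLE at *
  have := reflLength_conj w⁻¹ v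
  rw [inv_inv] at this
  rw [mul_inv_rev, inv_inv, this]
  omega

lemma AbsLE.exists_word {v w : Perm α} (h : AbsLE v w) :
    ∃ l : List (Perm α), l.prod = v ∧
      ∀ t ∈ l, ∃ a b, a ≠ b ∧ w.SameCycle a b ∧ t = swap a b := by
  obtain ⟨l₁, hl₁, rfl, hlen₁⟩ := exists_swap_word v
  obtain ⟨l₂, hl₂, hprod₂, hlen₂⟩ := exists_swap_word (l₁.prod⁻¹ * w)
  have hw : (l₁ ++ l₂).prod = w := by rw [List.prod_append, hprod₂, mul_inv_cancel_left]
  have hred := sameCycle_of_mem_reduced_word (l := l₁ ++ l₂)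
    (fun t ht => (List.mem_append.mp ht).elim (hl₁ t) (hl₂ t))
    (by rw [hw, List.length_append, hlen₁, hlen₂]; exact h)
  rw [hw] at hred
  exact ⟨l₁, rfl, fun t ht => hred t (List.mem_append_left _ ht)⟩

lemma support_prod_subset {l : List (Perm α)} {S : Finset α} (h : ∀ t ∈ l, t.support ⊆ S) :
    l.prod.support ⊆ S := by
  induction l with
  | nil => simp
  | cons t l ih =>
    rw [List.prod_cons]
    exact (support_mul_le _ _).trans
      (sup_le (h t List.mem_cons_self) (ih fun u hu => h u (List.mem_cons_of_mem _ hu)))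

lemma SameCycle.support_swap_subset {w : Perm α} {a b : α} (h : w.SameCycle a b) (hab : a ≠ b) :
    (swap a b).support ⊆ w.support := by
  rw [support_swap hab, insert_subset_iff, singleton_subset_iff]
  exact ⟨h.mem_support_of_ne hab, h.symm.mem_support_of_ne hab.symm⟩

lemma AbsLE.support_subset {v w : Perm α} (h : AbsLE v w) : v.support ⊆ w.support := by
  obtain ⟨l, rfl, hl⟩ := h.exists_word
  refine support_prod_subset fun t ht => ?_
  obtain ⟨a, b, hab, hsc, rfl⟩ := hl t ht
  exact hsc.support_swap_subset hab

lemma AbsLE.apply_eq_self {v w : Perm α} (h : AbsLE v w) {x : α} (hx : w x = x) : v x = x :=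
  notMem_support.mp fun hv => mem_support.mp (h.support_subset hv) hx

lemma exists_prod_eq_mul_of_support_subset {l : List (Perm α)} {S₁ S₂ : Finset α}
    (hS : _root_.Disjoint S₁ S₂) (h : ∀ t ∈ l, t.support ⊆ S₁ ∨ t.support ⊆ S₂) :
    ∃ u₁ u₂ : Perm α, l.prod = u₁ * u₂ ∧ u₁.support ⊆ S₁ ∧ u₂.support ⊆ S₂ := by
  induction l with
  | nil => exact ⟨1, 1, by simp⟩
  | cons t l ih =>
    obtain ⟨u₁, u₂, hprod, hu₁, hu₂⟩ := ih fun u hu => h u (List.mem_cons_of_mem _ hu)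
    rw [List.prod_cons, hprod]
    rcases h t List.mem_cons_self with ht | ht
    · exact ⟨t * u₁, u₂, (mul_assoc _ _ _).symm,
        (support_mul_le _ _).trans (sup_le ht hu₁), hu₂⟩
    · have hcomm : Commute t u₁ :=
        (disjoint_iff_disjoint_support.mpr ((hS.mono hu₁ ht).symm)).commute
      exact ⟨u₁, t * u₂, by rw [← mul_assoc, hcomm.eq, mul_assoc], hu₁,
        (support_mul_le _ _).trans (sup_le ht hu₂)⟩

lemma eq_and_eq_of_mul_eq_mul {S₁ S₂ : Finset α} (hS : _root_.Disjoint S₁ S₂)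
    {u₁ u₂ v₁ v₂ : Perm α} (hu₁ : u₁.support ⊆ S₁) (hu₂ : u₂.support ⊆ S₂)
    (hv₁ : v₁.support ⊆ S₁) (hv₂ : v₂.support ⊆ S₂) (h : u₁ * u₂ = v₁ * v₂) :
    u₁ = v₁ ∧ u₂ = v₂ := by
  have fix : ∀ {σ : Perm α} {S : Finset α} {x : α}, σ.support ⊆ S → x ∉ S → σ x = x :=
    fun hσ hx => notMem_support.mp fun h => hx (hσ h)
  have h₁ : u₁ = v₁ := by
    ext x
    by_cases hx : x ∈ S₁
    · have hx₂ : x ∉ S₂ := disjoint_left.mp hS hx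
      simpa [fix hu₂ hx₂, fix hv₂ hx₂] using congr($h x)
    · rw [fix hu₁ hx, fix hv₁ hx]
  exact ⟨h₁, mul_left_cancel (h₁ ▸ h)⟩

lemma Disjoint.mem_support_of_sameCycle_mul {c₁ c₂ : Perm α} (hd : c₁.Disjoint c₂)
    {a b : α} (h : (c₁ * c₂).SameCycle a b) (ha : a ∈ c₁.support) : b ∈ c₁.support := by
  refine h.mem_of_mapsTo (S := c₁.support) (fun x hx => ?_) ha
  rw [mem_coe, mul_apply, notMem_support.mp (hd.mem_imp hx)]
  exact apply_mem_support.mpr hx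

lemma AbsLE.mul {c₁ c₂ u₁ u₂ : Perm α} (hd : c₁.Disjoint c₂) (h₁ : AbsLE u₁ c₁)
    (h₂ : AbsLE u₂ c₂) : AbsLE (u₁ * u₂) (c₁ * c₂) := by
  have hu : u₁.Disjoint u₂ := hd.mono h₁.support_subset h₂.support_subset
  have hv : (u₁⁻¹ * c₁).Disjoint (u₂⁻¹ * c₂) :=
    hd.mono h₁.inv_mul.support_subset h₂.inv_mul.support_subset
  have hc : Commute u₂⁻¹ (u₁⁻¹ * c₁) :=
    (hd.mono h₁.inv_mul.support_subset h₂.support_subset).symm.inv_left.commute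
  have : (u₁ * u₂)⁻¹ * (c₁ * c₂) = (u₁⁻¹ * c₁) * (u₂⁻¹ * c₂) := by
    rw [mul_inv_rev, mul_assoc, ← mul_assoc u₁⁻¹, ← mul_assoc, hc.eq, mul_assoc]
  unfold AbsLE at *
  rw [this, hd.reflLength_mul, hu.reflLength_mul, hv.reflLength_mul]
  omega

lemma AbsLE.exists_mul_of_disjoint {c₁ c₂ u : Perm α} (hd : c₁.Disjoint c₂)
    (h : AbsLE u (c₁ * c₂)) : ∃ u₁ u₂, u = u₁ * u₂ ∧ AbsLE u₁ c₁ ∧ AbsLE u₂ c₂ := by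
  have split : ∀ {v}, AbsLE v (c₁ * c₂) → ∃ v₁ v₂ : Perm α,
      v = v₁ * v₂ ∧ v₁.support ⊆ c₁.support ∧ v₂.support ⊆ c₂.support := by
    intro v hv
    obtain ⟨l, rfl, hl⟩ := hv.exists_word
    refine exists_prod_eq_mul_of_support_subset hd.disjoint_support fun t ht => ?_
    obtain ⟨a, b, hab, hsc, rfl⟩ := hl t ht
    have ha := hsc.mem_support_of_ne hab
    rw [hd.support_mul, mem_union] at ha
    simp only [support_swap hab, insert_subset_iff, singleton_subset_iff]
    rcases ha with ha | ha
    · exact .inl ⟨ha, hd.mem_support_of_sameCycle_mul hsc ha⟩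
    · exact .inr ⟨ha, hd.symm.mem_support_of_sameCycle_mul (hd.commute.eq ▸ hsc) ha⟩
  obtain ⟨u₁, u₂, rfl, hu₁, hu₂⟩ := split h
  obtain ⟨v₁, v₂, hv, hv₁, hv₂⟩ := split h.inv_mul
  have hc : Commute u₂ v₁ := (hd.mono hv₁ hu₂).symm.commute
  obtain ⟨hc₁, hc₂⟩ : c₁ = u₁ * v₁ ∧ c₂ = u₂ * v₂ := by
    refine eq_and_eq_of_mul_eq_mul hd.disjoint_support le_rfl le_rfl
      ((support_mul_le _ _).trans (sup_le hu₁ hv₁))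
      ((support_mul_le _ _).trans (sup_le hu₂ hv₂)) ?_
    rw [← mul_assoc, mul_assoc u₁, ← hc.eq, ← mul_assoc, mul_assoc, ← hv,
      mul_inv_cancel_left]
  have := hc₁ ▸ reflLength_mul_le u₁ v₁
  have := hc₂ ▸ reflLength_mul_le u₂ v₂
  unfold AbsLE at h
  rw [hv, hd.reflLength_mul, (hd.mono hu₁ hu₂).reflLength_mul,
    (hd.mono hv₁ hv₂).reflLength_mul] at h
  refine ⟨u₁, u₂, rfl, ?_, ?_⟩ <;> unfold AbsLE
  · rw [hc₁, inv_mul_cancel_left, ← hc₁]; omega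
  · rw [hc₂, inv_mul_cancel_left, ← hc₂]; omega

/-! ### Counting the interval below a cycle -/

/-- The interval `[e, c]` of the absolute order; `NC(S_n, c)` when `c` is a Coxeter element. -/
def absIic (c : Perm α) : Finset (Perm α) := univ.filter (AbsLE · c)

@[simp] lemma mem_absIic {c w : Perm α} : w ∈ absIic c ↔ AbsLE w c := by simp [absIic]

lemma absIic_one : absIic (1 : Perm α) = {1} := by
  ext w
  simp [absLE_one_iff]

lemma absIic_swap_mul_self_apply (c : Perm α) (x : α) :
    absIic (swap x (c x) * c) = (absIic c).filter (· x = x) := by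
  by_cases hx : c x = x
  · rw [hx, swap_self, ← Perm.one_def, one_mul]
    ext w
    simpa using fun h => h.apply_eq_self hx
  have hc' := reflLength_swap_mul_self_apply hx
  have hle : AbsLE (swap x (c x) * c) c := by
    unfold AbsLE
    have := reflLength_conj c⁻¹ (swap x (c x))
    rw [inv_inv] at this
    rw [mul_inv_rev, swap_inv, this, reflLength_swap (Ne.symm hx)]
    omega
  ext w
  simp only [mem_absIic, mem_filter]
  constructor
  · intro hw
    exact ⟨hw.trans hle, hw.apply_eq_self (by simp)⟩
  · rintro ⟨hw, hwx⟩
    have hvx : (w⁻¹ * c) x ≠ x := fun h => by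
      rw [mul_apply, inv_eq_iff_eq, hwx] at h
      exact hx h
    have heq : w⁻¹ * (swap x (c x) * c) = swap x ((w⁻¹ * c) x) * (w⁻¹ * c) := by
      have := swap_apply_apply w⁻¹ x (c x)
      rw [inv_eq_iff_eq.mpr hwx.symm, inv_inv] at this
      rw [mul_apply, this]
      simp only [mul_assoc, mul_inv_cancel_left]
    have := reflLength_swap_mul_self_apply hvx
    unfold AbsLE at hw ⊢
    rw [heq]
    omega

lemma card_filter_absIic_apply_eq {c : Perm α} {x y : α} (hxy : x ≠ y)
    (hc : reflLength (swap x y * c) + 1 = reflLength c) :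
    #((absIic c).filter (· x = y)) = #((absIic (swap x y * c)).filter (· x = x)) := by
  refine card_nbij' (swap x y * ·) (swap x y * ·) (fun w hw => ?_) (fun u hu => ?_)
    (fun w _ => swap_mul_self_mul x y w) (fun u _ => swap_mul_self_mul x y u)
  · simp only [coe_filter, mem_absIic, Set.mem_ofPred_eq] at hw ⊢
    obtain ⟨hw, hwx⟩ := hw
    have := reflLength_swap_mul_self_apply (w := w) (x := x) (hwx ▸ hxy.symm)
    rw [hwx] at this
    refine ⟨?_, by simp [hwx]⟩
    unfold AbsLE at hw ⊢
    rw [mul_inv_rev, swap_inv, mul_assoc, swap_mul_self_mul]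
    omega
  · simp only [coe_filter, mem_absIic, Set.mem_ofPred_eq] at hu ⊢
    obtain ⟨hu, hux⟩ := hu
    have := reflLength_swap_mul_le u x y
    have := reflLength_mul_le (swap x y * u) ((swap x y * u)⁻¹ * c)
    rw [mul_inv_cancel_left] at this
    refine ⟨?_, by simp [hux]⟩
    unfold AbsLE at hu ⊢
    rw [show (swap x y * u)⁻¹ * c = u⁻¹ * (swap x y * c) by
      rw [mul_inv_rev, swap_inv, mul_assoc]] at *
    omega

lemma absIic_mul {c₁ c₂ : Perm α} (hd : c₁.Disjoint c₂) :
    absIic (c₁ * c₂) = (absIic c₁ ×ˢ absIic c₂).image fun p => p.1 * p.2 := by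
  ext u
  simp only [mem_absIic, mem_image, mem_product, Prod.exists]
  constructor
  · intro h
    obtain ⟨u₁, u₂, rfl, h₁, h₂⟩ := h.exists_mul_of_disjoint hd
    exact ⟨u₁, u₂, ⟨h₁, h₂⟩, rfl⟩
  · rintro ⟨u₁, u₂, ⟨h₁, h₂⟩, rfl⟩
    exact h₁.mul hd h₂

lemma card_filter_absIic_mul {c₁ c₂ : Perm α} (hd : c₁.Disjoint c₂) {x : α}
    (hx : c₂ x = x) :
    #((absIic (c₁ * c₂)).filter (· x = x)) =
      #((absIic c₁).filter (· x = x)) * #(absIic c₂) := by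
  have hfilter : (absIic c₁ ×ˢ absIic c₂).filter (fun p => (p.1 * p.2) x = x) =
      (absIic c₁).filter (· x = x) ×ˢ absIic c₂ := by
    ext ⟨u₁, u₂⟩
    simp only [mem_filter, mem_product, mem_absIic]
    constructor
    · rintro ⟨⟨h₁, h₂⟩, h⟩
      rw [mul_apply, h₂.apply_eq_self hx] at h
      exact ⟨⟨h₁, h⟩, h₂⟩
    · rintro ⟨⟨h₁, h⟩, h₂⟩
      rw [mul_apply, h₂.apply_eq_self hx]
      exact ⟨⟨h₁, h₂⟩, h⟩
  rw [absIic_mul hd, filter_image, hfilter, card_image_of_injOn, card_product]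
  rintro ⟨u₁, u₂⟩ hu ⟨v₁, v₂⟩ hv h
  simp only [coe_product, coe_filter, Set.mem_prod, Set.mem_ofPred_eq, mem_coe, mem_absIic] at hu hv
  obtain ⟨rfl, rfl⟩ := eq_and_eq_of_mul_eq_mul hd.disjoint_support hu.1.1.support_subset
    hu.2.support_subset hv.1.1.support_subset hv.2.support_subset h
  rfl

lemma IsCycle.isCycle_or_eq_one_swap_mul_self_apply {c : Perm α} (hc : c.IsCycle) {x : α}
    (hx : c x ≠ x) : (swap x (c x) * c).IsCycle ∨ swap x (c x) * c = 1 := by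
  refine isCycle_or_eq_one_of_card_support_le ?_
  have hsub : (swap x (c x) * c).support ⊆ c.support.erase x := fun y hy =>
    mem_erase.mpr (mem_support_swap_mul_imp_mem_support_ne hy).symm
  have := card_le_card hsub
  rw [card_erase_of_mem (mem_support.mpr hx), ← hc.reflLength_add_one,
    ← reflLength_swap_mul_self_apply hx] at this
  omega

lemma isCycle_or_eq_one_cycleOf_inv_mul {w : Perm α} {x : α}
    (h : #(insert x w.support) ≤ reflLength w + 2) :
    ((w.cycleOf x)⁻¹ * w).IsCycle ∨ (w.cycleOf x)⁻¹ * w = 1 := by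
  refine isCycle_or_eq_one_of_card_support_le ?_
  have hd := disjoint_cycleOf_inv_mul w x
  have hsupp := hd.support_mul
  rw [mul_inv_cancel_left] at hsupp
  have hdisj : _root_.Disjoint (insert x (w.cycleOf x).support) ((w.cycleOf x)⁻¹ * w).support :=
    disjoint_insert_left.mpr
      ⟨notMem_support.mpr (cycleOf_inv_mul_apply_self w x), hd.disjoint_support⟩
  have := card_union_of_disjoint hdisj
  rw [insert_union, ← hsupp, card_insert_support_cycleOf] at this
  have := reflLength_cycleOf_add w x
  omega

lemma IsCycle.isCycleOn_support {c : Perm α} (hc : c.IsCycle) : c.IsCycleOn c.support := by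
  rw [coe_support_eq_set_support]
  exact hc.isCycleOn

lemma card_insert_support_cycleOf_swap_mul {c : Perm α} (hc : c.IsCycle) {x y : α}
    (hx : c x ≠ x) {i : ℕ} (hi : i + 1 < #c.support) (hy : (c ^ (i + 1)) x = y) :
    #(insert x ((swap x y * c).cycleOf x).support) = i + 1 := by
  have hcyc := hc.isCycleOn_support
  have hxs : x ∈ c.support := mem_support.mpr hx
  have hne : ∀ j, 0 < j → j ≤ i → (c ^ j) x ≠ x ∧ (c ^ j) x ≠ y := fun j hj hji =>
    ⟨fun h => Nat.not_dvd_of_pos_of_lt hj (by omega) ((hcyc.pow_apply_eq hxs).mp h),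
     fun h => by
      rw [← hy] at h
      have := ((hcyc.pow_apply_eq_pow_apply hxs).mp h).eq_of_lt_of_lt (by omega) hi
      omega⟩
  have hlast : ((swap x y * c) ^ (i + 1)) x = x := by
    rw [pow_succ_swap_mul_apply hne, hy, swap_apply_right]
  have hearly : ∀ j, 0 < j → j ≤ i → ((swap x y * c) ^ j) x ≠ x := fun j hj hji => by
    rw [pow_swap_mul_apply fun k hk hkj => hne k hk (hkj.trans hji)]
    exact (hne j hj hji).1
  have hdvd := (pow_apply_eq_self_iff_dvd _ x _).mp hlast
  have hpos : 0 < #(insert x ((swap x y * c).cycleOf x).support) :=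
    card_pos.mpr (insert_nonempty _ _)
  by_contra hlt
  exact hearly _ hpos (by have := Nat.le_of_dvd i.succ_pos hdvd; omega)
    ((pow_apply_eq_self_iff_dvd _ x _).mpr dvd_rfl)

lemma card_filter_absIic_cycleOf {n : ℕ} (ih : ∀ c : Perm α, (c.IsCycle ∨ c = 1) →
      reflLength c < n → #(absIic c) = catalan (reflLength c + 1))
    (w : Perm α) (x : α) (hn : reflLength (w.cycleOf x) ≤ n) :
    #((absIic (w.cycleOf x)).filter (· x = x)) = catalan (reflLength (w.cycleOf x)) := by
  rw [← absIic_swap_mul_self_apply]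
  by_cases hx : w x = x
  · rw [(cycleOf_eq_one_iff w).mpr hx, one_apply, swap_self, ← Perm.one_def, one_mul, absIic_one,
      card_singleton, reflLength_one, catalan_zero]
  have hγx : w.cycleOf x x ≠ x := by rwa [cycleOf_apply_self]
  have := reflLength_swap_mul_self_apply hγx
  rw [ih _ ((isCycle_cycleOf w hx).isCycle_or_eq_one_swap_mul_self_apply hγx) (by omega), this]

lemma card_filter_absIic_pow_succ_apply {n : ℕ} (ih : ∀ c : Perm α, (c.IsCycle ∨ c = 1) →
      reflLength c < n → #(absIic c) = catalan (reflLength c + 1))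
    {c : Perm α} (hc : c.IsCycle) (hn : reflLength c ≤ n) {x : α} (hx : c x ≠ x) {i : ℕ}
    (hi : i < reflLength c) :
    #((absIic c).filter (· x = (c ^ (i + 1)) x)) = catalan i * catalan (reflLength c - i) := by
  have hm := hc.reflLength_add_one
  obtain ⟨y, hy⟩ : ∃ y, (c ^ (i + 1)) x = y := ⟨_, rfl⟩
  rw [hy]
  have hsc : c.SameCycle x y := ⟨((i + 1 : ℕ) : ℤ), by rw [zpow_natCast, hy]⟩
  have hxy : x ≠ y := fun h => Nat.not_dvd_of_pos_of_lt i.succ_pos (by omega)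
    ((hc.isCycleOn_support.pow_apply_eq (mem_support.mpr hx)).mp (hy.trans h.symm))
  have hd := hsc.reflLength_swap_mul hxy
  have horbit := card_insert_support_cycleOf_swap_mul hc hx (by omega) hy
  have hsupp : insert x (swap x y * c).support ⊆ c.support :=
    insert_subset (mem_support.mpr hx) ((support_mul_le _ _).trans
      (sup_le (hsc.support_swap_subset hxy) le_rfl))
  rw [card_filter_absIic_apply_eq hxy hd]
  set d := swap x y * c
  rw [card_insert_support_cycleOf] at horbit
  have hsplit := reflLength_cycleOf_add d x
  have hr := isCycle_or_eq_one_cycleOf_inv_mul (x := x) (le_trans (card_le_card hsupp) (by omega))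
  rw [← mul_inv_cancel_left (d.cycleOf x) d,
    card_filter_absIic_mul (disjoint_cycleOf_inv_mul d x) (cycleOf_inv_mul_apply_self d x),
    card_filter_absIic_cycleOf ih d x (by omega), ih _ hr (by omega)]
  congr 2 <;> omega

/-- Indexing the fibres by `i + 1` puts the fibre `w x = x` last, as in Catalan's recurrence. -/
lemma card_absIic_eq_sum {c : Perm α} (hc : c.IsCycle) {x : α} (hx : c x ≠ x) :
    #(absIic c) = ∑ i ∈ range #c.support, #((absIic c).filter (· x = (c ^ (i + 1)) x)) := by
  have hxs : x ∈ c.support := mem_support.mpr hx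
  have hmaps : Set.MapsTo (· x) (absIic c : Set (Perm α)) c.support := fun w hw => by
    by_cases hwx : w x = x
    · simpa [hwx] using hxs
    · exact (mem_absIic.mp hw).support_subset (apply_mem_support.mpr (mem_support.mpr hwx))
  have hinj : Set.InjOn (fun i => (c ^ (i + 1)) x) (range #c.support) := fun i hi j hj h => by
    simp only [coe_range, Set.mem_Iio] at hi hj
    exact (((hc.isCycleOn_support.pow_apply_eq_pow_apply hxs).mp h).add_right_cancel' 1
      ).eq_of_lt_of_lt hi hj
  have himage : (range #c.support).image (fun i => (c ^ (i + 1)) x) = c.support := by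
    refine eq_of_subset_of_card_le (fun y hy => ?_) (by rw [card_image_of_injOn hinj, card_range])
    obtain ⟨i, -, rfl⟩ := mem_image.mp hy
    exact pow_apply_mem_support.mpr hxs
  calc #(absIic c) = ∑ y ∈ c.support, #((absIic c).filter (· x = y)) :=
        card_eq_sum_card_fiberwise hmaps
    _ = ∑ y ∈ (range #c.support).image (fun i => (c ^ (i + 1)) x),
          #((absIic c).filter (· x = y)) := by rw [himage]
    _ = _ := sum_image hinj

theorem card_absIic {c : Perm α} (hc : c.IsCycle ∨ c = 1) :
    #(absIic c) = catalan (reflLength c + 1) := by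
  induction hn : reflLength c using Nat.strong_induction_on generalizing c with
  | _ n ih =>
  rcases hc with hc | rfl
  · obtain ⟨x, hx, -⟩ := id hc
    have ih' : ∀ c' : Perm α, (c'.IsCycle ∨ c' = 1) → reflLength c' < n →
        #(absIic c') = catalan (reflLength c' + 1) := fun c' hc' hlt => ih _ hlt hc' rfl
    have hlast : (c ^ (n + 1)) x = x := by
      rw [← hn, hc.reflLength_add_one]
      exact hc.isCycleOn_support.pow_card_apply (mem_support.mpr hx)
    have hfix := card_filter_absIic_cycleOf ih' c x (by rw [hc.cycleOf_eq hx, hn])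
    rw [hc.cycleOf_eq hx] at hfix
    rw [card_absIic_eq_sum hc hx, ← hc.reflLength_add_one, hn, sum_range_succ, hlast, catalan_succ,
      Fin.sum_univ_eq_sum_range (fun i => catalan i * catalan (n - i)), sum_range_succ, hfix, hn,
      Nat.sub_self, catalan_zero, mul_one]
    congr 1
    refine sum_congr rfl fun i hi => ?_
    rw [card_filter_absIic_pow_succ_apply ih' hc hn.le hx (hn ▸ mem_range.mp hi), hn]
  · subst hn
    simp [absIic_one]

end Equiv.Perm

/-! ### Standard Coxeter elements -/

open Equiv Equiv.Perm

lemma adjSwap_apply_le {n : ℕ} {i j : Fin n} (hji : j ≠ i) {y : Fin (n + 1)}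
    (hy : (y : ℕ) ≤ i) : (adjSwap n j y : ℕ) ≤ i := by
  have : (j : ℕ) ≠ i := Fin.val_ne_of_ne hji
  unfold adjSwap
  rw [swap_apply_def]
  split_ifs with h₁ h₂ <;>
    simp only [Fin.ext_iff, Fin.val_castSucc, Fin.val_succ] at * <;> omega

lemma prod_adjSwap_apply_le {n : ℕ} {l : List (Fin n)} {i : Fin n} (hi : i ∉ l)
    {y : Fin (n + 1)} (hy : (y : ℕ) ≤ i) : ((l.map (adjSwap n)).prod y : ℕ) ≤ i := by
  induction l with
  | nil => simpa
  | cons j l ih =>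
    simp only [List.mem_cons, not_or] at hi
    rw [List.map_cons, List.prod_cons, mul_apply]
    exact adjSwap_apply_le (Ne.symm hi.1) (ih hi.2)

lemma not_sameCycle_prod_adjSwap {n : ℕ} {l : List (Fin n)} {i : Fin n} (hi : i ∉ l) :
    ¬((l.map (adjSwap n)).prod).SameCycle i.castSucc i.succ := fun h => by
  have := h.mem_of_mapsTo (S := {y : Fin (n + 1) | (y : ℕ) ≤ i})
    (fun y hy => prod_adjSwap_apply_le hi hy) (by simp)
  simp at this

lemma reflLength_prod_adjSwap {n : ℕ} {l : List (Fin n)} (hl : l.Nodup) :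
    reflLength (l.map (adjSwap n)).prod = l.length := by
  induction l with
  | nil => simp
  | cons i l ih =>
    rw [List.nodup_cons] at hl
    rw [List.map_cons, List.prod_cons, adjSwap,
      reflLength_swap_mul_of_not_sameCycle (not_sameCycle_prod_adjSwap hl.1), ih hl.2,
      List.length_cons]

/-- The number of `c`-noncrossing partitions of `S_{n+1}` (the interval `[e,c]` in the
absolute order) is the Catalan number `C_{n+1}`. -/
theorem stmt13 (n : ℕ) (c : Equiv.Perm (Fin (n+1))) (hc : IsStdCoxeter n c) :
    Nat.card {w : Equiv.Perm (Fin (n+1)) // absLe w c} = catalan (n+1) := by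
  obtain ⟨l, hl, hmem, rfl⟩ := hc
  have hlen : reflLength (l.map (adjSwap n)).prod = n := by
    rw [reflLength_prod_adjSwap hl, ← List.toFinset_card_of_nodup hl,
      eq_univ_iff_forall.mpr fun i => List.mem_toFinset.mpr (hmem i), card_univ, Fintype.card_fin]
  have hcyc := isCycle_or_eq_one_of_card_support_le (w := (l.map (adjSwap n)).prod)
    (by rw [hlen]; exact (card_le_univ _).trans (by simp))
  rw [Nat.card_congr (Equiv.subtypeEquivRight fun w => absLe_iff_absLE), Nat.card_eq_fintype_card,
    Fintype.card_subtype]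
  exact (card_absIic hcyc).trans (by rw [hlen])
end
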